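/- arXiv:2403.09927 — 8 statements merged into one kernel-verified Lean document; each statement's English description precedes it below -/
import Mathlib

section
/- Suppose X ∈ S^n_+(ℤ) and rank(X) = 1 (as a real matrix). Then X = λ · x xᵀ for some integer vector x ∈ ℤⁿ and some integer λ ≥ 1. -/
/-!
Rank one forces every 2 × 2 minor of `X` to vanish; with symmetry this gives
`X i i • X = vecMulVec r r` for the row `r = X i`, where `X i i ≠ 0`. Write `r = d • y` with `y`
primitive and choose a Bezout vector `u` with `u ⬝ᵥ y = 1`. Then `λ = u ⬝ᵥ X *ᵥ u` is an integer
with `X i i * λ = d * d`, so `X = λ • vecMulVec y y`, and `λ ≥ 1` since `X` is PSD and nonzero.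
-/

open Matrix

theorem exists_eq_smul_dotProduct_eq_one {n R : Type*} [CommRing R] [IsDomain R]
    [IsPrincipalIdealRing R] [Fintype n] {r : n → R} (hr : r ≠ 0) :
    ∃ (d : R) (y u : n → R), r = d • y ∧ u ⬝ᵥ y = 1 := by
  obtain ⟨d, hd⟩ := Submodule.IsPrincipal.principal (Ideal.span (Set.range r))
  have hdvd : ∀ i, d ∣ r i := fun i ↦ by
    rw [← Ideal.mem_span_singleton, ← Ideal.submodule_span_eq, ← hd]
    exact Ideal.subset_span ⟨i, rfl⟩
  choose y hy using hdvd
  obtain ⟨u, hu⟩ := Ideal.mem_span_range_iff_exists_fun.mp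
    (hd ▸ Ideal.mem_span_singleton_self d : d ∈ Ideal.span (Set.range r))
  have hd0 : d ≠ 0 := by
    rintro rfl
    exact hr (funext fun i ↦ by simpa using hy i)
  refine ⟨d, y, u, funext hy, mul_left_cancel₀ hd0 ?_⟩
  conv_rhs => rw [mul_one, ← hu]
  simp only [dotProduct, Finset.mul_sum, hy]
  exact Finset.sum_congr rfl fun i _ ↦ by ring

namespace Matrix

variable {m n R : Type*}

theorem mul_mul_eq_mul_mul_of_rank_le_one {K : Type*} [Field K] [Fintype n]
    {A : Matrix m n K} (hA : A.rank ≤ 1) (i j : m) (k l : n) :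
    A i k * A j l = A i l * A j k := by
  obtain ⟨v, hv⟩ := finrank_le_one_iff.mp hA
  have hcol : ∀ k, ∃ c : K, ∀ i, A i k = c * v.1 i := fun k ↦ by
    classical
    obtain ⟨c, hc⟩ := hv ⟨A *ᵥ Pi.single k 1, LinearMap.mem_range_self A.mulVecLin _⟩
    exact ⟨c, fun i ↦ by simpa [mulVec_single_one] using congrFun (congrArg Subtype.val hc).symm i⟩
  choose c hc using hcol
  simp only [hc]
  ring

namespace IsSymm

variable {X : Matrix n n R}

theorem exists_diag_ne_zero [CommSemiring R] [NoZeroDivisors R] (hX : X.IsSymm)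
    (hminor : ∀ i j k l, X i k * X j l = X i l * X j k) (hX0 : X ≠ 0) :
    ∃ i, X i i ≠ 0 := by
  by_contra! hdiag
  refine hX0 (Matrix.ext fun i j ↦ ?_)
  have h : X i j * X j i = 0 := by rw [hminor, hdiag, zero_mul]
  rw [hX.apply i j] at h
  simpa using h

theorem diag_smul_eq_vecMulVec [CommSemiring R] (hX : X.IsSymm)
    (hminor : ∀ i j k l, X i k * X j l = X i l * X j k) (i : n) :
    X i i • X = vecMulVec (X i) (X i) := by
  refine Matrix.ext fun j k ↦ ?_
  rw [smul_apply, smul_eq_mul, vecMulVec_apply, hminor, hX.apply i j, mul_comm]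

end IsSymm

theorem eq_smul_vecMulVec_of_smul_eq [CommRing R] [NoZeroDivisors R] [Fintype n]
    {X : Matrix n n R} {a c : R} {y u : n → R} (ha : a ≠ 0)
    (hX : a • X = c • vecMulVec y y) (hu : u ⬝ᵥ y = 1) :
    X = (u ⬝ᵥ X *ᵥ u) • vecMulVec y y := by
  have hc : a * (u ⬝ᵥ X *ᵥ u) = c := by
    calc a * (u ⬝ᵥ X *ᵥ u) = u ⬝ᵥ (a • X) *ᵥ u := by
          rw [smul_mulVec, dotProduct_smul, smul_eq_mul]
      _ = c * ((u ⬝ᵥ y) * (y ⬝ᵥ u)) := by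
          rw [hX, smul_mulVec, dotProduct_smul, vecMulVec_mulVec, op_smul_eq_smul,
            dotProduct_smul, smul_eq_mul, smul_eq_mul, mul_comm (y ⬝ᵥ u)]
      _ = c := by rw [hu, dotProduct_comm, hu, mul_one, mul_one]
  refine smul_right_injective (Matrix n n R) ha ?_
  simp only [hX, smul_smul, hc]

end Matrix

/-- An integer PSD matrix of (real) rank one has the form `λ · x xᵀ`
with `x ∈ ℤⁿ` and `λ ∈ ℤ`, `λ ≥ 1`. -/
theorem psd_int_rank_one_eq_smul_vecMulVec
    (n : ℕ) (X : Matrix (Fin n) (Fin n) ℤ)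
    (hX : (X.map (Int.cast : ℤ → ℝ)).PosSemidef)
    (hrank : (X.map (Int.cast : ℤ → ℝ)).rank = 1) :
    ∃ (x : Fin n → ℤ) (lam : ℤ), 1 ≤ lam ∧ X = lam • Matrix.vecMulVec x x := by
  have hX0 : X ≠ 0 := by
    rintro rfl
    simp at hrank
  have hsymm : X.IsSymm := map_injective (Int.cast_injective (α := ℝ)) <| by
    dsimp only
    rw [transpose_map, ← conjTranspose_eq_transpose_of_trivial, hX.isHermitian.eq]
  have hminor : ∀ i j k l, X i k * X j l = X i l * X j k := fun i j k l ↦ by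
    simpa only [map_apply, ← Int.cast_mul, Int.cast_inj] using
      mul_mul_eq_mul_mul_of_rank_le_one hrank.le i j k l
  obtain ⟨i, hi⟩ := hsymm.exists_diag_ne_zero hminor hX0
  obtain ⟨d, y, u, hdy, hu⟩ := exists_eq_smul_dotProduct_eq_one fun h ↦ hi (congrFun h i)
  have hXy : X i i • X = (d * d) • vecMulVec y y := by
    rw [hsymm.diag_smul_eq_vecMulVec hminor, hdy, smul_vecMulVec, vecMulVec_smul, smul_smul]
  have hXeq := eq_smul_vecMulVec_of_smul_eq hi hXy hu
  refine ⟨y, _, ?_, hXeq⟩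
  have hnonneg : 0 ≤ u ⬝ᵥ X *ᵥ u := by
    have := hX.dotProduct_mulVec_nonneg (fun j ↦ (u j : ℝ))
    simp only [star_trivial, dotProduct, mulVec, map_apply] at this ⊢
    exact_mod_cast this
  have hne : u ⬝ᵥ X *ᵥ u ≠ 0 := fun h ↦ hX0 (by rw [hXeq, h, zero_smul])
  omega
end

section
/- Let γ_n := sup over all n×n real positive definite matrices A of λ₁(A)ⁿ / det(A), where λ₁(A) := min_{x ∈ ℤⁿ \ {0}} xᵀ A x (the Hermite constant). If X ∈ S^n_+(ℤ) is sporadic, then det(X) < γ_n. -/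
open Matrix

/-- `λ₁(A) = min_{x ∈ ℤⁿ \ {0}} xᵀ A x`. -/
noncomputable def lambdaOne {n : ℕ} (A : Matrix (Fin n) (Fin n) ℝ) : ℝ :=
  sInf {v : ℝ | ∃ x : Fin n → ℤ, x ≠ 0 ∧
    v = (fun i => (x i : ℝ)) ⬝ᵥ A.mulVec (fun i => (x i : ℝ))}

/-- The Hermite constant `γ_n = sup_{A ≻ 0} λ₁(A)ⁿ / det A`. -/
noncomputable def hermiteConstant (n : ℕ) : ℝ :=
  sSup {t : ℝ | ∃ A : Matrix (Fin n) (Fin n) ℝ, A.PosDef ∧ t = lambdaOne A ^ n / A.det}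

/-!
If `det X = 0` the claim is `0 < γ_n`, witnessed by the identity matrix. Otherwise `X` is positive
definite, and the two Schur complements of the block matrix `[[X, x], [xᵀ, 1]]` show that
`X - x xᵀ ⪰ 0` iff `xᵀ X⁻¹ x ≤ 1`. So sporadicity says `xᵀ X⁻¹ x > 1` for every nonzero integral
`x`; as `det X • X⁻¹ = adj X` is integral, even `xᵀ X⁻¹ x ≥ 1 + 1 / det X`, whence
`λ₁(X⁻¹)ⁿ / det X⁻¹ ≥ (1 + 1 / det X)ⁿ det X > det X`. Minkowski's convex body theorem gives
`λ₁(A)ⁿ ≤ (2n)ⁿ det A`, so the supremum defining `γ_n` is finite and dominates this value.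
-/

namespace Matrix
variable {ι : Type*} [Fintype ι]

def IsSporadic (X : Matrix ι ι ℤ) : Prop :=
  ¬ ∃ x : ι → ℤ, x ≠ 0 ∧ ((X - vecMulVec x x).map (Int.cast : ℤ → ℝ)).PosSemidef

variable [DecidableEq ι]

theorem PosDef.sub_vecMulVec_posSemidef_iff {X : Matrix ι ι ℝ} (hX : X.PosDef) (x : ι → ℝ) :
    (X - vecMulVec x x).PosSemidef ↔ x ⬝ᵥ X⁻¹ *ᵥ x ≤ 1 := by
  have := hX.isUnit.invertible
  let B : Matrix ι Unit ℝ := replicateCol Unit x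
  let D : Matrix Unit Unit ℝ := 1
  have : Invertible D := invertibleOne
  have hcol : X - B * D⁻¹ * Bᴴ = X - vecMulVec x x := by
    simp [B, D, vecMulVec_eq Unit]
  have hrow : D - Bᴴ * X⁻¹ * B = diagonal fun _ => 1 - x ⬝ᵥ X⁻¹ *ᵥ x := by
    ext
    simp only [D, B, conjTranspose_replicateCol, star_trivial, ← replicateCol_mulVec]
    simp [← mulVec_mulVec, replicateRow_mulVec_eq_const]
  rw [← hcol, ← PosDef.fromBlocks₂₂ X B PosDef.one, PosDef.fromBlocks₁₁ B D hX, hrow,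
    posSemidef_diagonal_iff]
  simp

open MeasureTheory in
theorem exists_ne_zero_abs_mulVec_intCast_le (B : Matrix ι ι ℝ) (hB : B.det ≠ 0) {t : ℝ}
    (ht : 0 ≤ t) (hdet : |B.det| < t ^ Fintype.card ι) :
    ∃ x : ι → ℤ, x ≠ 0 ∧ ∀ i, |(B *ᵥ fun j => (x j : ℝ)) i| ≤ t := by
  let b := Pi.basisFun ℝ ι
  let s : Set (ι → ℝ) := B.toLin' ⁻¹' Set.univ.pi fun _ => Set.Icc (-t) t
  have hsymm : ∀ v ∈ s, -v ∈ s := by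
    intro v hv i _
    have := hv i trivial
    simp only [Set.mem_Icc, map_neg, toLin'_apply, Pi.neg_apply] at this ⊢
    constructor <;> linarith [this.1, this.2]
  have hconv : Convex ℝ s := (convex_pi fun _ _ => convex_Icc (-t) t).linear_preimage _
  have hvol : volume (ZSpan.fundamentalDomain b) * 2 ^ Module.finrank ℝ (ι → ℝ) < volume s := by
    rw [Measure.addHaar_preimage_linearMap _ (by rwa [LinearMap.det_toLin']), volume_pi_pi,
      ZSpan.fundamentalDomain_pi_basisFun, volume_pi_pi]
    simp only [Real.volume_Ico, Real.volume_Icc, Finset.prod_const, Finset.card_univ,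
      Module.finrank_fintype_fun_eq_card, sub_zero, sub_neg_eq_add, ENNReal.ofReal_one, one_pow,
      one_mul, LinearMap.det_toLin', abs_inv]
    rw [← ENNReal.ofReal_pow (by linarith), ← ENNReal.ofReal_mul (by positivity),
      ← ENNReal.ofReal_ofNat 2, ← ENNReal.ofReal_pow zero_le_two,
      ENNReal.ofReal_lt_ofReal_iff_of_nonneg (by positivity), ← two_mul, mul_pow,
      lt_inv_mul_iff₀ (abs_pos.2 hB), mul_comm]
    gcongr
  have : Countable (Submodule.span ℤ (Set.range b)) := inferInstance
  obtain ⟨v, hv0, hvs⟩ :=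
    exists_ne_zero_mem_lattice_of_measure_mul_two_pow_lt_measure
      (ZSpan.isAddFundamentalDomain' b volume) hsymm hconv hvol
  have hint : ∀ i, ∃ z : ℤ, (z : ℝ) = (v : ι → ℝ) i := fun i => by
    simpa [b] using (b.mem_span_iff_repr_mem ℤ _).mp v.2 i
  choose x hx using hint
  have hxv : (fun j => (x j : ℝ)) = v := funext hx
  refine ⟨x, fun h => hv0 (Subtype.ext ?_), fun i => abs_le.2 (hxv ▸ hvs i trivial)⟩
  simp only [← hxv, h, Pi.zero_apply, Int.cast_zero]
  rfl

open scoped MatrixOrder Matrix.Norms.L2Operator in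
theorem PosDef.exists_ne_zero_intCast_dotProduct_mulVec_le {A : Matrix ι ι ℝ} (hA : A.PosDef)
    {t : ℝ} (ht : 0 ≤ t) (hdet : A.det < t ^ (2 * Fintype.card ι)) :
    ∃ x : ι → ℤ, x ≠ 0 ∧
      (fun i => (x i : ℝ)) ⬝ᵥ A *ᵥ (fun i => (x i : ℝ)) ≤ Fintype.card ι * t ^ 2 := by
  obtain ⟨B, rfl⟩ := CStarAlgebra.nonneg_iff_eq_star_mul_self.mp hA.posSemidef.nonneg
  have hdetB : (star B * B).det = B.det ^ 2 := by
    rw [det_mul, star_eq_conjTranspose, det_conjTranspose, star_trivial, sq]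
  rw [hdetB, pow_mul'] at hdet
  obtain ⟨x, hx0, hx⟩ := B.exists_ne_zero_abs_mulVec_intCast_le
    (pow_ne_zero_iff two_ne_zero |>.mp (hdetB ▸ hA.det_pos.ne'))
    ht (abs_lt_of_sq_lt_sq hdet (by positivity))
  refine ⟨x, hx0, ?_⟩
  rw [← mulVec_mulVec, dotProduct_mulVec, star_eq_conjTranspose, vecMul_conjTranspose,
    star_trivial, star_trivial]
  calc ∑ i, (B *ᵥ fun j => (x j : ℝ)) i * (B *ᵥ fun j => (x j : ℝ)) i
      ≤ ∑ _i : ι, t ^ 2 := Finset.sum_le_sum fun i _ => by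
        rw [← sq, ← sq_abs]; exact pow_le_pow_left₀ (abs_nonneg _) (hx i) 2
    _ = Fintype.card ι * t ^ 2 := by simp

theorem inv_map_intCast (X : Matrix ι ι ℤ) :
    (X.map (Int.cast : ℤ → ℝ))⁻¹ = (X.det : ℝ)⁻¹ • X.adjugate.map (Int.cast : ℤ → ℝ) := by
  rw [inv_def, Ring.inverse_eq_inv', Int.cast_det]
  congr 1
  exact ((Int.castRingHom ℝ).map_adjugate X).symm

theorem intCast_dotProduct_inv_mulVec (X : Matrix ι ι ℤ) (x : ι → ℤ) :
    (fun i => (x i : ℝ)) ⬝ᵥ (X.map (Int.cast : ℤ → ℝ))⁻¹ *ᵥ (fun i => (x i : ℝ)) =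
      (x ⬝ᵥ X.adjugate *ᵥ x : ℤ) / X.det := by
  rw [inv_map_intCast, smul_mulVec, dotProduct_smul, smul_eq_mul, inv_mul_eq_div]
  simp [dotProduct, mulVec]

theorem one_add_inv_det_le_intCast_dotProduct_inv_mulVec {X : Matrix ι ι ℤ}
    (hX : (X.map (Int.cast : ℤ → ℝ)).PosDef)
    (hsp : X.IsSporadic) {x : ι → ℤ} (hx : x ≠ 0) :
    1 + (X.det : ℝ)⁻¹ ≤
      (fun i => (x i : ℝ)) ⬝ᵥ (X.map (Int.cast : ℤ → ℝ))⁻¹ *ᵥ (fun i => (x i : ℝ)) := by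
  have hmap : (X - vecMulVec x x).map (Int.cast : ℤ → ℝ) =
      X.map Int.cast - vecMulVec (fun i => (x i : ℝ)) (fun i => (x i : ℝ)) := by
    ext; simp [vecMulVec_apply]
  have hlt : 1 < (fun i => (x i : ℝ)) ⬝ᵥ (X.map (Int.cast : ℤ → ℝ))⁻¹ *ᵥ (fun i => (x i : ℝ)) := by
    by_contra! hle
    exact hsp ⟨x, hx, hmap ▸ (hX.sub_vecMulVec_posSemidef_iff _).2 hle⟩
  have hdet : (0 : ℝ) < X.det := Int.cast_det (R := ℝ) X ▸ hX.det_pos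
  rw [intCast_dotProduct_inv_mulVec, one_lt_div hdet] at hlt
  rw [intCast_dotProduct_inv_mulVec, le_div_iff₀ hdet, add_mul, inv_mul_cancel₀ hdet.ne', one_mul]
  exact_mod_cast Int.add_one_le_of_lt (by exact_mod_cast hlt)

end Matrix

section HermiteConstant
variable {n : ℕ}

theorem lambdaOne_le {A : Matrix (Fin n) (Fin n) ℝ} (hA : A.PosSemidef) {x : Fin n → ℤ}
    (hx : x ≠ 0) : lambdaOne A ≤ (fun i => (x i : ℝ)) ⬝ᵥ A *ᵥ (fun i => (x i : ℝ)) :=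
  csInf_le ⟨0, by rintro _ ⟨y, -, rfl⟩; simpa using hA.dotProduct_mulVec_nonneg _⟩ ⟨x, hx, rfl⟩

theorem le_lambdaOne (hn : 1 ≤ n) {A : Matrix (Fin n) (Fin n) ℝ} {c : ℝ}
    (h : ∀ x : Fin n → ℤ, x ≠ 0 → c ≤ (fun i => (x i : ℝ)) ⬝ᵥ A *ᵥ (fun i => (x i : ℝ))) :
    c ≤ lambdaOne A :=
  le_csInf ⟨_, Pi.single ⟨0, hn⟩ 1, by simp, rfl⟩ (by rintro _ ⟨x, hx, rfl⟩; exact h x hx)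

theorem lambdaOne_nonneg (hn : 1 ≤ n) {A : Matrix (Fin n) (Fin n) ℝ} (hA : A.PosSemidef) :
    0 ≤ lambdaOne A :=
  le_lambdaOne hn fun x _ => by simpa using hA.dotProduct_mulVec_nonneg _

theorem lambdaOne_pow_le (hn : 1 ≤ n) {A : Matrix (Fin n) (Fin n) ℝ} (hA : A.PosDef) :
    lambdaOne A ^ n ≤ (2 * n) ^ n * A.det := by
  by_contra! h
  set l := lambdaOne A
  have hl : 0 < l := by
    refine lt_of_pow_lt_pow_left₀ n (lambdaOne_nonneg hn hA.posSemidef) ?_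
    rw [zero_pow (by omega)]
    exact h.trans' (by have := hA.det_pos; positivity)
  set t := √(l / (2 * n))
  have ht : t ^ 2 = l / (2 * n) := Real.sq_sqrt (by positivity)
  have hdet : A.det < t ^ (2 * Fintype.card (Fin n)) := by
    rw [Fintype.card_fin, pow_mul, ht, div_pow, lt_div_iff₀ (by positivity), mul_comm]
    exact h
  obtain ⟨x, hx, hxA⟩ := hA.exists_ne_zero_intCast_dotProduct_mulVec_le (Real.sqrt_nonneg _) hdet
  have : (Fintype.card (Fin n) : ℝ) * t ^ 2 = l / 2 := by
    rw [Fintype.card_fin, ht]; field_simp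
  linarith [lambdaOne_le hA.posSemidef hx]

theorem div_det_le_hermiteConstant (hn : 1 ≤ n) {A : Matrix (Fin n) (Fin n) ℝ} (hA : A.PosDef) :
    lambdaOne A ^ n / A.det ≤ hermiteConstant n := by
  refine le_csSup ⟨(2 * n) ^ n, ?_⟩ ⟨A, hA, rfl⟩
  rintro _ ⟨B, hB, rfl⟩
  exact div_le_of_le_mul₀ hB.det_pos.le (by positivity) (lambdaOne_pow_le hn hB)

theorem one_le_lambdaOne_one (hn : 1 ≤ n) : 1 ≤ lambdaOne (1 : Matrix (Fin n) (Fin n) ℝ) := by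
  refine le_lambdaOne hn fun x hx => ?_
  obtain ⟨i, hi⟩ := Function.ne_iff.mp hx
  rw [one_mulVec]
  calc (1 : ℝ) ≤ (x i : ℝ) * x i := by
        rw [← sq]; exact_mod_cast (one_le_sq_iff_one_le_abs _).2 (Int.one_le_abs hi)
    _ ≤ ∑ j, (x j : ℝ) * x j :=
        Finset.single_le_sum (f := fun j => (x j : ℝ) * x j) (fun j _ => mul_self_nonneg _)
          (Finset.mem_univ i)

theorem one_le_hermiteConstant (hn : 1 ≤ n) : 1 ≤ hermiteConstant n := by
  calc (1 : ℝ) ≤ lambdaOne (1 : Matrix (Fin n) (Fin n) ℝ) ^ n / det 1 := by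
        rw [det_one, div_one]; exact one_le_pow₀ (one_le_lambdaOne_one hn)
    _ ≤ hermiteConstant n := div_det_le_hermiteConstant hn PosDef.one

end HermiteConstant

/-- A sporadic matrix `X ∈ S^n_+(ℤ)` satisfies `det X < γ_n`. -/
theorem det_lt_hermiteConstant_of_sporadic
    (n : ℕ) (hn : 1 ≤ n) (X : Matrix (Fin n) (Fin n) ℤ)
    (hX : (X.map (Int.cast : ℤ → ℝ)).PosSemidef)
    (hsporadic : ¬ ∃ x : Fin n → ℤ, x ≠ 0 ∧
      ((X - Matrix.vecMulVec x x).map (Int.cast : ℤ → ℝ)).PosSemidef) :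
    (X.det : ℝ) < hermiteConstant n := by
  set Xr := X.map (Int.cast : ℤ → ℝ)
  have hdet : (X.det : ℝ) = Xr.det := Int.cast_det X
  rcases (hdet ▸ hX.det_nonneg).eq_or_lt with hzero | hpos
  · rw [← hzero]
    exact zero_lt_one.trans_le (one_le_hermiteConstant hn)
  have hXr : Xr.PosDef := hX.posDef_iff_det_ne_zero.2 (hdet ▸ hpos.ne')
  have hlam : 1 + (X.det : ℝ)⁻¹ ≤ lambdaOne Xr⁻¹ :=
    le_lambdaOne hn fun x hx => one_add_inv_det_le_intCast_dotProduct_inv_mulVec hXr hsporadic hx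
  calc (X.det : ℝ) < (1 + (X.det : ℝ)⁻¹) ^ n * X.det :=
        lt_mul_left hpos (one_lt_pow₀ (lt_add_of_pos_right _ (inv_pos.2 hpos)) (by omega))
    _ ≤ lambdaOne Xr⁻¹ ^ n * X.det := by gcongr
    _ = lambdaOne Xr⁻¹ ^ n / Xr⁻¹.det := by
        rw [det_nonsing_inv, Ring.inverse_eq_inv', ← hdet, div_inv_eq_mul]
    _ ≤ hermiteConstant n := div_det_le_hermiteConstant hn hXr.inv
end

section
/- Let M be the 6×6 integer matrix with rows (2,0,1,1,1,1), (0,2,0,1,1,1), (1,0,2,1,1,1), (1,1,1,2,1,1), (1,1,1,1,2,1), (1,1,1,1,1,2). Then M is positive semidefinite, det(M) = 3, and M is sporadic, i.e., there is no x ∈ ℤ⁶ \ {0} such that M − x xᵀ is positive semidefinite. -/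
/-!
If `M - x xᵀ ⪰ 0`, then `(x ⬝ v)² ≤ vᵀ M v` for every `v`. Testing this with the basis vectors
gives `x ∈ {-1, 0, 1}⁶`, since the diagonal of `M` is `2`. Testing it with `v = A x`, where
`A = adj M` satisfies `M A = 3 I`, gives `q(x)² ≤ 3 q(x)` for `q(x) = xᵀ A x`, so `q(x) ≤ 3`.
But `q ≥ 4` at every nonzero point of `{-1, 0, 1}⁶`, which is a finite check.
-/

open Matrix

/-- Mordell's `6 × 6` matrix. -/
def mordellM : Matrix (Fin 6) (Fin 6) ℤ :=
  !![2, 0, 1, 1, 1, 1;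
     0, 2, 0, 1, 1, 1;
     1, 0, 2, 1, 1, 1;
     1, 1, 1, 2, 1, 1;
     1, 1, 1, 1, 2, 1;
     1, 1, 1, 1, 1, 2]

section QuadraticForm

variable {n R : Type*} [Fintype n]

theorem dotProduct_sub_vecMulVec_mulVec [CommRing R] (M : Matrix n n R) (x v : n → R) :
    v ⬝ᵥ (M - vecMulVec x x) *ᵥ v = v ⬝ᵥ M *ᵥ v - (x ⬝ᵥ v) ^ 2 := by
  rw [sub_mulVec, vecMulVec_mulVec, dotProduct_sub, op_smul_eq_smul, dotProduct_smul,
    dotProduct_comm v x, smul_eq_mul, sq]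

theorem Matrix.PosSemidef.dotProduct_mulVec_intCast_nonneg {N : Matrix n n ℤ}
    (h : (N.map (Int.cast : ℤ → ℝ)).PosSemidef) (v : n → ℤ) : 0 ≤ v ⬝ᵥ N *ᵥ v := by
  have hcast : ((v ⬝ᵥ N *ᵥ v : ℤ) : ℝ) =
      star (Int.cast ∘ v) ⬝ᵥ N.map (Int.cast : ℤ → ℝ) *ᵥ (Int.cast ∘ v) := by
    rw [star_trivial, ← eq_intCast (Int.castRingHom ℝ), RingHom.map_dotProduct]
    congr 1
    ext i
    exact RingHom.map_mulVec _ _ _ _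
  exact_mod_cast hcast ▸ h.dotProduct_mulVec_nonneg (Int.cast ∘ v)

theorem sq_dotProduct_le_of_posSemidef_sub_vecMulVec {M : Matrix n n ℤ} {x : n → ℤ}
    (h : ((M - vecMulVec x x).map (Int.cast : ℤ → ℝ)).PosSemidef) (v : n → ℤ) :
    (x ⬝ᵥ v) ^ 2 ≤ v ⬝ᵥ M *ᵥ v := by
  have := h.dotProduct_mulVec_intCast_nonneg v
  rwa [dotProduct_sub_vecMulVec_mulVec, sub_nonneg] at this

variable [CommRing R] [PartialOrder R] {M : Matrix n n R} {x : n → R}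

theorem sq_le_diag_of_forall_sq_dotProduct_le [DecidableEq n]
    (h : ∀ v, (x ⬝ᵥ v) ^ 2 ≤ v ⬝ᵥ M *ᵥ v) (i : n) : x i ^ 2 ≤ M i i := by
  simpa using h (Pi.single i 1)

theorem sq_dotProduct_mulVec_le_of_mul_eq_smul_one [DecidableEq n] {A : Matrix n n R} {d : R}
    (hMA : M * A = d • 1) (h : ∀ v, (x ⬝ᵥ v) ^ 2 ≤ v ⬝ᵥ M *ᵥ v) :
    (x ⬝ᵥ A *ᵥ x) ^ 2 ≤ d * (x ⬝ᵥ A *ᵥ x) := by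
  have hMAx : M *ᵥ (A *ᵥ x) = d • x := by
    rw [mulVec_mulVec, hMA, smul_mulVec, one_mulVec]
  simpa [hMAx, dotProduct_comm (A *ᵥ x) x] using h (A *ᵥ x)

end QuadraticForm

theorem mordellM_posSemidef : (mordellM.map (Int.cast : ℤ → ℝ)).PosSemidef := by
  refine .of_dotProduct_mulVec_nonneg ?_ fun v => ?_
  · exact isHermitian_iff_isSymm.2 (IsSymm.map (by decide) _)
  · -- the `LDLᵀ` decomposition of `M`
    have hLDL : star v ⬝ᵥ mordellM.map (Int.cast : ℤ → ℝ) *ᵥ v =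
        2 * (v 0 + (v 2 + v 3 + v 4 + v 5) / 2) ^ 2 + 2 * (v 1 + (v 3 + v 4 + v 5) / 2) ^ 2
          + 3 / 2 * (v 2 + (v 3 + v 4 + v 5) / 3) ^ 2 + 5 / 6 * (v 3 - (v 4 + v 5) / 5) ^ 2
          + 4 / 5 * (v 4 - v 5 / 4) ^ 2 + 3 / 4 * v 5 ^ 2 := by
      simp only [dotProduct, Pi.star_apply, star_trivial, mulVec, mordellM, map_apply, of_apply,
        cons_val', cons_val_fin_one, Fin.sum_univ_succ, cons_val_zero, cons_val_succ,
        Fin.succ_zero_eq_one, Fin.succ_one_eq_two, Fin.reduceSucc, Finset.univ_unique,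
        Fin.default_eq_zero, Finset.sum_singleton, Int.cast_ofNat, Int.cast_zero, Int.cast_one]
      ring
    rw [hLDL]
    positivity

theorem mordellM_det : mordellM.det = 3 := by
  simp [det_succ_row_zero, Fin.sum_univ_succ, Fin.succAbove, mordellM]

theorem mordellM_diag (i : Fin 6) : mordellM i i = 2 := by
  fin_cases i <;> rfl

def mordellAdj : Matrix (Fin 6) (Fin 6) ℤ :=
  !![4, 3, 1, -2, -2, -2;
     3, 6, 3, -3, -3, -3;
     1, 3, 4, -2, -2, -2;
     -2, -3, -2, 4, 1, 1;
     -2, -3, -2, 1, 4, 1;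
     -2, -3, -2, 1, 1, 4]

theorem mordellM_mul_mordellAdj : mordellM * mordellAdj = (3 : ℤ) • 1 := by
  decide

theorem four_le_mordellAdj_form :
    ∀ x ∈ Fintype.piFinset (fun _ : Fin 6 => Finset.Icc (-1 : ℤ) 1),
      x ≠ 0 → 4 ≤ x ⬝ᵥ mordellAdj *ᵥ x := by
  decide +kernel

/-- The matrix `M` is positive semidefinite, has determinant `3`, and
is sporadic: no nonzero `x ∈ ℤ⁶` satisfies `M - x xᵀ ⪰ 0`. -/
theorem mordellM_psd_det_three_sporadic :
    (mordellM.map (Int.cast : ℤ → ℝ)).PosSemidef ∧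
    mordellM.det = 3 ∧
    ¬ ∃ x : Fin 6 → ℤ, x ≠ 0 ∧
      ((mordellM - Matrix.vecMulVec x x).map (Int.cast : ℤ → ℝ)).PosSemidef := by
  refine ⟨mordellM_posSemidef, mordellM_det, ?_⟩
  rintro ⟨x, hx0, hpsd⟩
  have hdom := sq_dotProduct_le_of_posSemidef_sub_vecMulVec hpsd
  have hbox : x ∈ Fintype.piFinset (fun _ => Finset.Icc (-1 : ℤ) 1) := by
    refine Fintype.mem_piFinset.2 fun i => Finset.mem_Icc.2 ?_
    have := sq_le_diag_of_forall_sq_dotProduct_le hdom i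
    rw [mordellM_diag] at this
    constructor <;> nlinarith
  have hq := sq_dotProduct_mulVec_le_of_mul_eq_smul_one mordellM_mul_mordellAdj hdom
  have h4 := four_le_mordellAdj_form x hbox hx0
  nlinarith
end

section
/- For every n ≥ 1, the set of sporadic matrices in S^n_+(ℤ) decomposes into finitely many orbits under the action X ↦ U X Uᵀ of GL(n,ℤ); equivalently, there is a finite set R of sporadic matrices in S^n_+(ℤ) such that every sporadic X ∈ S^n_+(ℤ) is unimodularly equivalent to some element of R. -/
open Matrix

/-- An integer symmetric matrix regarded as a real matrix is positive semidefinite. -/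
def IsIntPSD {n : ℕ} (X : Matrix (Fin n) (Fin n) ℤ) : Prop :=
  (X.map (Int.cast : ℤ → ℝ)).PosSemidef

/-- `X ∈ S^n_+(ℤ)` is sporadic if there is no nonzero `x ∈ ℤⁿ` with `X - x xᵀ` PSD. -/
def IsSporadicPSD {n : ℕ} (X : Matrix (Fin n) (Fin n) ℤ) : Prop :=
  ¬ ∃ x : Fin n → ℤ, x ≠ 0 ∧ IsIntPSD (X - Matrix.vecMulVec x x)

/-!
If `det X = 0`, a primitive integer kernel vector of `X` is completed to a unimodular basis; in
it `X` becomes `0 ⊕ X₁` with `X₁` again positive semidefinite and sporadic, and we induct on `n`.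
If `det X ≠ 0`, then `X` is positive definite, and Hermite's reduction gives for every positive
definite `Q` a unimodular `U` with `∏ (U Q Uᵀ)ᵢᵢ ≤ 4 ^ n ^ 2 * det Q`. Applied to `X⁻¹`, it
produces a nonzero integer vector `u` with `uᵀ X⁻¹ u < 1` as soon as `det X > 4 ^ n ^ 2`; then
`X - u uᵀ` is positive semidefinite (a Schur complement), against sporadicity. Applied to `X`
itself, now with `det X ≤ 4 ^ n ^ 2`, it bounds the diagonal of `U X Uᵀ`, and
`(U X Uᵀ)ᵢⱼ² ≤ (U X Uᵀ)ᵢᵢ (U X Uᵀ)ⱼⱼ` bounds the other entries. Only finitely many integer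
matrices have bounded entries.

Hermite's reduction goes by induction on `n`: a nonzero integer vector minimising `xᵀ Q x` is
primitive, so it can be made the first basis vector; the Schur complement of its diagonal entry is
reduced by induction, and the remaining basis vectors are size-reduced against the first one, which
costs at most a factor `4 / 3` on each diagonal entry since none can drop below the minimum.
-/

namespace Matrix

section Bordered
variable {R : Type*} [CommRing R] {n : ℕ}

/-- The matrix `[[a, 0], [c, V]]`. -/
def lowerBordered (a : R) (c : Fin n → R) (V : Matrix (Fin n) (Fin n) R) :
    Matrix (Fin (n + 1)) (Fin (n + 1)) R :=
  of (vecCons (vecCons a 0) fun i => vecCons (c i) (V i))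

variable (a : R) (c : Fin n → R) (V : Matrix (Fin n) (Fin n) R)

@[simp] lemma lowerBordered_zero : lowerBordered a c V 0 = vecCons a 0 := rfl

@[simp] lemma lowerBordered_succ (i : Fin n) :
    lowerBordered a c V i.succ = vecCons (c i) (V i) := by
  ext j
  simp [lowerBordered]

lemma lowerBordered_map {S : Type*} [CommRing S] (f : R → S) (hf : f 0 = 0) :
    (lowerBordered a c V).map f = lowerBordered (f a) (f ∘ c) (V.map f) := by
  ext i j
  cases i using Fin.cases <;> cases j using Fin.cases <;> simp [hf]

lemma lowerBordered_mul (a' : R) (c' : Fin n → R) (V' : Matrix (Fin n) (Fin n) R) :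
    lowerBordered a c V * lowerBordered a' c' V' =
      lowerBordered (a * a') (a' • c + V *ᵥ c') (V * V') := by
  ext i j
  cases i using Fin.cases <;> cases j using Fin.cases <;>
    simp [mul_apply, Fin.sum_univ_succ, mulVec, dotProduct, mul_comm]

lemma lowerBordered_transpose_zero : (lowerBordered a 0 V)ᵀ = lowerBordered a 0 Vᵀ := by
  ext i j
  cases i using Fin.cases <;> cases j using Fin.cases <;> simp

lemma det_eq_mul_det_submatrix_succ_of_row (A : Matrix (Fin (n + 1)) (Fin (n + 1)) R)
    (hA : ∀ j : Fin n, A 0 j.succ = 0) :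
    A.det = A 0 0 * (A.submatrix Fin.succ Fin.succ).det := by
  simp [det_succ_row_zero A, Fin.sum_univ_succ, hA]

lemma det_eq_mul_det_submatrix_succ_of_col (A : Matrix (Fin (n + 1)) (Fin (n + 1)) R)
    (hA : ∀ i : Fin n, A i.succ 0 = 0) :
    A.det = A 0 0 * (A.submatrix Fin.succ Fin.succ).det := by
  simp [det_succ_column_zero A, Fin.sum_univ_succ, hA]

lemma det_lowerBordered : (lowerBordered a c V).det = a * V.det := by
  rw [det_eq_mul_det_submatrix_succ_of_row _ (by simp)]
  rfl

lemma cons_dotProduct_mulVec_cons (Y : Matrix (Fin (n + 1)) (Fin (n + 1)) R) (a : R)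
    (x : Fin n → R) :
    vecCons a x ⬝ᵥ Y *ᵥ vecCons a x = Y 0 0 * a ^ 2 +
      a * ((fun j : Fin n => Y 0 j.succ) ⬝ᵥ x + x ⬝ᵥ fun i : Fin n => Y i.succ 0) +
        x ⬝ᵥ Y.submatrix Fin.succ Fin.succ *ᵥ x := by
  simp only [dotProduct, mulVec, Fin.sum_univ_succ, cons_val_zero, cons_val_succ,
    submatrix_apply, mul_add, Finset.mul_sum, Finset.sum_add_distrib]
  ring_nf

lemma PosSemidef.lowerBordered_zero_zero [PartialOrder R] [StarRing R]
    {Z : Matrix (Fin n) (Fin n) R} (hZ : Z.PosSemidef) : (lowerBordered 0 0 Z).PosSemidef := by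
  set E : Matrix (Fin (n + 1)) (Fin n) R := of fun i j => if j.succ = i then 1 else 0
  have hE : lowerBordered 0 0 Z = E * Z * Eᴴ := by
    ext i j
    cases i using Fin.cases <;> cases j using Fin.cases <;> simp [E, mul_apply, apply_ite star]
  rw [hE]
  exact hZ.mul_mul_conjTranspose_same E

end Bordered

section Schur
variable {K : Type*} [Field K] {n : ℕ}

/-- The Schur complement `D - C A⁻¹ B` of the `1 × 1` corner `A = Y 0 0`. -/
def schurComplZero (Y : Matrix (Fin (n + 1)) (Fin (n + 1)) K) : Matrix (Fin n) (Fin n) K :=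
  Y.submatrix Fin.succ Fin.succ -
    (Y 0 0)⁻¹ • vecMulVec (fun i : Fin n => Y i.succ 0) fun j : Fin n => Y 0 j.succ

lemma cons_dotProduct_mulVec_cons_eq_schurComplZero {Y : Matrix (Fin (n + 1)) (Fin (n + 1)) K}
    (hY : Y.IsSymm) (hY₀ : Y 0 0 ≠ 0) (a : K) (x : Fin n → K) :
    vecCons a x ⬝ᵥ Y *ᵥ vecCons a x =
      Y 0 0 * (a + (fun j : Fin n => Y 0 j.succ) ⬝ᵥ x / Y 0 0) ^ 2 +
        x ⬝ᵥ schurComplZero Y *ᵥ x := by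
  have hcol : (fun i : Fin n => Y i.succ 0) = fun j : Fin n => Y 0 j.succ :=
    funext fun i => hY.apply 0 i.succ
  rw [cons_dotProduct_mulVec_cons, schurComplZero, sub_mulVec, dotProduct_sub, smul_mulVec,
    vecMulVec_mulVec, dotProduct_smul, dotProduct_smul, hcol, dotProduct_comm x]
  simp only [MulOpposite.smul_eq_mul_unop, MulOpposite.unop_op, smul_eq_mul]
  field_simp
  ring

lemma det_eq_mul_det_schurComplZero (Y : Matrix (Fin (n + 1)) (Fin (n + 1)) K)
    (hY₀ : Y 0 0 ≠ 0) : Y.det = Y 0 0 * (schurComplZero Y).det := by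
  set L := lowerBordered 1 (-(Y 0 0)⁻¹ • fun i : Fin n => Y i.succ 0) 1
  have hLY : ∀ i : Fin n, (L * Y) i.succ 0 = 0 := fun i => by
    simp only [L, mul_apply, lowerBordered_succ, Fin.sum_univ_succ, cons_val_zero, cons_val_succ,
      one_apply, ite_mul, one_mul, zero_mul, Finset.sum_ite_eq, Finset.mem_univ, if_true,
      Pi.smul_apply, smul_eq_mul]
    field_simp
    ring
  calc Y.det = (L * Y).det := by simp [L, det_lowerBordered]
    _ = Y 0 0 * (schurComplZero Y).det := by
      rw [det_eq_mul_det_submatrix_succ_of_col _ hLY]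
      congr 2
      · simp [L, mul_apply, Fin.sum_univ_succ]
      · ext i j
        simp only [L, schurComplZero, mul_apply, lowerBordered_succ, Fin.sum_univ_succ,
          cons_val_zero, cons_val_succ, one_apply, ite_mul, one_mul, zero_mul, Finset.sum_ite_eq,
          Finset.mem_univ, if_true, Pi.smul_apply, smul_eq_mul, submatrix_apply, sub_apply,
          smul_apply, vecMulVec_apply]
        ring

lemma IsSymm.schurComplZero {Y : Matrix (Fin (n + 1)) (Fin (n + 1)) K} (hY : Y.IsSymm) :
    (schurComplZero Y).IsSymm :=
  IsSymm.ext fun i j => by simp [Matrix.schurComplZero, vecMulVec_apply, hY.apply, mul_comm]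

lemma PosDef.schurComplZero [PartialOrder K] [StarRing K] [TrivialStar K]
    {Y : Matrix (Fin (n + 1)) (Fin (n + 1)) K} (hY : Y.PosDef) : Y.schurComplZero.PosDef := by
  have hsymm : Y.IsSymm := isHermitian_iff_isSymm.mp hY.isHermitian
  refine posDef_iff_dotProduct_mulVec.mpr
    ⟨isHermitian_iff_isSymm.mpr hsymm.schurComplZero, fun x hx => ?_⟩
  have hcons : vecCons (-((fun j : Fin n => Y 0 j.succ) ⬝ᵥ x / Y 0 0)) x ≠ 0 :=
    fun h => hx (funext fun i => by simpa using congrFun h i.succ)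
  have := hY.dotProduct_mulVec_pos hcons
  rw [star_trivial, cons_dotProduct_mulVec_cons_eq_schurComplZero hsymm hY.diag_pos.ne'] at this
  simpa using this

end Schur

section Conj
variable {ι κ : Type*} [Fintype ι] {R : Type*} [CommRing R]

lemma mul_mul_transpose_apply (B : Matrix κ ι R) (Q : Matrix ι ι R) (i j : κ) :
    (B * Q * Bᵀ) i j = B i ⬝ᵥ Q *ᵥ B j := by
  simp only [mul_apply, transpose_apply, Finset.sum_mul, mul_assoc, dotProduct, mulVec,
    Finset.mul_sum]
  exact Finset.sum_comm

lemma dotProduct_mul_mul_transpose_mulVec [Fintype κ] (B : Matrix κ ι R) (Q : Matrix ι ι R)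
    (x : κ → R) : x ⬝ᵥ (B * Q * Bᵀ) *ᵥ x = (Bᵀ *ᵥ x) ⬝ᵥ Q *ᵥ (Bᵀ *ᵥ x) := by
  rw [← mulVec_mulVec, ← mulVec_mulVec, dotProduct_mulVec, mulVec_transpose]

lemma row_ne_zero_of_isUnit_det [DecidableEq ι] [Nontrivial R] {A : Matrix ι ι R}
    (hA : IsUnit A.det) (i : ι) : A i ≠ 0 :=
  fun h => hA.ne_zero (det_eq_zero_of_row_eq_zero i (congrFun h))

lemma mulVec_ne_zero_of_isUnit_det [DecidableEq ι] {A : Matrix ι ι R} (hA : IsUnit A.det)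
    {x : ι → R} (hx : x ≠ 0) : A *ᵥ x ≠ 0 := fun h =>
  hx (mulVec_injective_of_isUnit ((isUnit_iff_isUnit_det A).mpr hA)
    (h.trans (mulVec_zero A).symm))

lemma nonsing_inv_mul_mul_transpose_cancel [DecidableEq ι] {U : Matrix ι ι R}
    (hU : IsUnit U.det) (X : Matrix ι ι R) : U⁻¹ * (U * X * Uᵀ) * U⁻¹ᵀ = X := by
  rw [transpose_nonsing_inv, ← Matrix.mul_assoc, ← Matrix.mul_assoc, nonsing_inv_mul U hU,
    Matrix.one_mul, Matrix.mul_assoc, mul_nonsing_inv _ (by rwa [det_transpose]), Matrix.mul_one]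

omit [Fintype ι] in
lemma intCast_comp_smul (g : ℤ) (y : ι → ℤ) :
    (Int.cast ∘ (g • y) : ι → R) = (g : R) • (Int.cast ∘ y) := by
  ext; simp

lemma intCast_comp_vecCons {n : ℕ} (a : ℤ) (x : Fin n → ℤ) :
    (Int.cast ∘ vecCons a x : Fin (n + 1) → R) = vecCons (a : R) (Int.cast ∘ x) :=
  Fin.comp_cons _ _ _

lemma intCast_comp_mulVec (A : Matrix κ ι ℤ) (y : ι → ℤ) :
    (Int.cast ∘ (A *ᵥ y) : κ → R) = A.map (Int.cast : ℤ → R) *ᵥ (Int.cast ∘ y) :=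
  funext fun i => RingHom.map_mulVec (Int.castRingHom R) A y i

lemma map_intCast_mul {ν : Type*} (A : Matrix κ ι ℤ) (B : Matrix ι ν ℤ) :
    (A * B).map (Int.cast : ℤ → R) = A.map (Int.cast : ℤ → R) * B.map (Int.cast : ℤ → R) :=
  Matrix.map_mul (f := Int.castRingHom R)

def intConj (U : Matrix κ ι ℤ) (Q : Matrix ι ι R) : Matrix κ κ R :=
  U.map (Int.cast : ℤ → R) * Q * (U.map (Int.cast : ℤ → R))ᵀ

lemma intConj_apply (U : Matrix κ ι ℤ) (Q : Matrix ι ι R) (i j : κ) :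
    intConj U Q i j = (Int.cast ∘ U i) ⬝ᵥ Q *ᵥ (Int.cast ∘ U j) :=
  mul_mul_transpose_apply _ _ _ _

lemma dotProduct_intConj_mulVec [Fintype κ] (U : Matrix κ ι ℤ) (Q : Matrix ι ι R)
    (x : κ → ℤ) : (Int.cast ∘ x) ⬝ᵥ intConj U Q *ᵥ (Int.cast ∘ x) =
      (Int.cast ∘ (Uᵀ *ᵥ x)) ⬝ᵥ Q *ᵥ (Int.cast ∘ (Uᵀ *ᵥ x)) := by
  rw [intConj, dotProduct_mul_mul_transpose_mulVec, intCast_comp_mulVec, transpose_map]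

lemma intConj_mul [Fintype κ] {ν : Type*} (W : Matrix ν κ ℤ) (A : Matrix κ ι ℤ)
    (Q : Matrix ι ι R) : intConj (W * A) Q = intConj W (intConj A Q) := by
  rw [intConj, intConj, intConj, map_intCast_mul, transpose_mul]
  simp only [Matrix.mul_assoc]

lemma intCast_mul_mul_transpose (U : Matrix κ ι ℤ) (X : Matrix ι ι ℤ) :
    (U * X * Uᵀ).map (Int.cast : ℤ → R) = intConj U (X.map (Int.cast : ℤ → R)) := by
  rw [intConj, map_intCast_mul, map_intCast_mul, transpose_map]

variable [DecidableEq ι]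

lemma det_intConj {A : Matrix ι ι ℤ} (hA : IsUnit A.det) (Q : Matrix ι ι R) :
    (intConj A Q).det = Q.det := by
  rw [intConj, det_mul, det_mul, det_transpose, ← Int.cast_det, mul_right_comm, ← Int.cast_mul,
    Int.isUnit_mul_self hA, Int.cast_one, one_mul]

lemma PosDef.intConj_of_isUnit_det {Q : Matrix ι ι ℝ} (hQ : Q.PosDef) {A : Matrix ι ι ℤ}
    (hA : IsUnit A.det) : (intConj A Q).PosDef := by
  have hA' : IsUnit (A.map (Int.cast : ℤ → ℝ)) := by
    rw [isUnit_iff_isUnit_det, ← Int.cast_det]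
    exact hA.map (Int.castRingHom ℝ)
  simpa [Matrix.intConj, star_eq_conjTranspose, conjTranspose_eq_transpose_of_trivial] using
    (IsUnit.posDef_star_right_conjugate_iff hA').mpr hQ

end Conj

section Real
variable {ι : Type*}

lemma PosDef.exists_mul_sq_norm_le [Fintype ι] {Q : Matrix ι ι ℝ} (hQ : Q.PosDef) :
    ∃ c > 0, ∀ x : ι → ℝ, c * ‖x‖ ^ 2 ≤ x ⬝ᵥ Q *ᵥ x := by
  obtain ⟨c, hc, hmin⟩ : ∃ c > 0, ∀ u ∈ Metric.sphere (0 : ι → ℝ) 1, c ≤ u ⬝ᵥ Q *ᵥ u := by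
    rcases (Metric.sphere (0 : ι → ℝ) 1).eq_empty_or_nonempty with h | h
    · exact ⟨1, one_pos, by simp [h]⟩
    · obtain ⟨u, hu, hmin⟩ := (isCompact_sphere (0 : ι → ℝ) 1).exists_isMinOn h
        (f := fun x => x ⬝ᵥ Q *ᵥ x) (by fun_prop)
      exact ⟨_, by simpa using hQ.dotProduct_mulVec_pos (ne_zero_of_mem_unit_sphere ⟨u, hu⟩),
        fun w hw => hmin hw⟩
  refine ⟨c, hc, fun x => ?_⟩
  rcases eq_or_ne x 0 with rfl | hx
  · simp
  have hx' : 0 < ‖x‖ := norm_pos_iff.mpr hx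
  have := hmin (‖x‖⁻¹ • x) (by simp [norm_smul, hx'.ne'])
  rw [mulVec_smul, dotProduct_smul, smul_dotProduct, smul_eq_mul, smul_eq_mul] at this
  calc c * ‖x‖ ^ 2 ≤ ‖x‖⁻¹ * (‖x‖⁻¹ * x ⬝ᵥ Q *ᵥ x) * ‖x‖ ^ 2 := by gcongr
    _ = x ⬝ᵥ Q *ᵥ x := by field_simp

lemma PosDef.exists_min_intVec [Fintype ι] [DecidableEq ι] [Nonempty ι] {Q : Matrix ι ι ℝ}
    (hQ : Q.PosDef) : ∃ v : ι → ℤ, v ≠ 0 ∧ ∀ x : ι → ℤ, x ≠ 0 →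
      (Int.cast ∘ v) ⬝ᵥ Q *ᵥ (Int.cast ∘ v) ≤ (Int.cast ∘ x) ⬝ᵥ Q *ᵥ (Int.cast ∘ x) := by
  set q : (ι → ℤ) → ℝ := fun x => (Int.cast ∘ x) ⬝ᵥ Q *ᵥ (Int.cast ∘ x)
  obtain ⟨c, hc, hcQ⟩ := hQ.exists_mul_sq_norm_le
  obtain ⟨e, he⟩ : ∃ e : ι → ℤ, e ≠ 0 := ⟨Pi.single (Classical.arbitrary ι) 1, by simp⟩
  set N : ℤ := ⌈q e / c⌉
  have hbox : {x | x ≠ 0 ∧ q x ≤ q e} ⊆ Set.Icc (fun _ => -N) fun _ => N := by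
    rintro x ⟨-, hx⟩
    suffices ∀ i, |x i| ≤ N from
      ⟨fun i => neg_le_of_abs_le (this i), fun i => le_of_abs_le (this i)⟩
    intro i
    have hxi : c * |(x i : ℝ)| ^ 2 ≤ q e :=
      calc c * |(x i : ℝ)| ^ 2 ≤ c * ‖(Int.cast ∘ x : ι → ℝ)‖ ^ 2 := by
            gcongr; exact norm_le_pi_norm (Int.cast ∘ x : ι → ℝ) i
        _ ≤ q e := (hcQ _).trans hx
    have : (|x i| : ℝ) ≤ q e / c := by
      rw [le_div_iff₀ hc]
      calc (|x i| : ℝ) * c ≤ |(x i : ℝ)| ^ 2 * c := by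
            gcongr; exact_mod_cast Int.le_self_sq |x i|
        _ ≤ q e := by linarith
    exact_mod_cast this.trans (Int.le_ceil _)
  obtain ⟨v, ⟨hv, -⟩, hmin⟩ := Set.exists_min_image _ q ((Set.finite_Icc _ _).subset hbox)
    ⟨e, he, le_rfl⟩
  refine ⟨v, hv, fun x hx => ?_⟩
  rcases le_or_gt (q x) (q e) with hxe | hxe
  · exact hmin x ⟨hx, hxe⟩
  · exact (hmin e ⟨he, le_rfl⟩).trans hxe.le

lemma PosDef.posSemidef_sub_vecMulVec [Fintype ι] [DecidableEq ι] {A : Matrix ι ι ℝ}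
    (hA : A.PosDef) {x : ι → ℝ} (hx : x ⬝ᵥ A⁻¹ *ᵥ x ≤ 1) : (A - vecMulVec x x).PosSemidef := by
  -- `A - x xᵀ` and `1 - xᵀ A⁻¹ x` are the two Schur complements of `[[A, x], [xᵀ, 1]]`
  have := hA.isUnit.invertible
  have : Invertible (1 : Matrix (Fin 1) (Fin 1) ℝ) := invertibleOne
  set B : Matrix ι (Fin 1) ℝ := replicateCol (Fin 1) x
  have hBt : Bᴴ = Bᵀ := conjTranspose_eq_transpose_of_trivial B
  have hBB : B * (1 : Matrix (Fin 1) (Fin 1) ℝ)⁻¹ * Bᴴ = vecMulVec x x := by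
    rw [inv_one, Matrix.mul_one, hBt, vecMulVec_eq (Fin 1), transpose_replicateCol]
    rfl
  have hschur : 1 - Bᴴ * A⁻¹ * B = (1 - x ⬝ᵥ A⁻¹ *ᵥ x) • (1 : Matrix (Fin 1) (Fin 1) ℝ) := by
    ext i j
    fin_cases i; fin_cases j
    have hrow : Bᵀ 0 = x := rfl
    simpa [hBt, hrow] using mul_mul_transpose_apply Bᵀ A⁻¹ 0 0
  rw [← hBB, ← PosDef.fromBlocks₂₂ A B PosDef.one, PosDef.fromBlocks₁₁ B 1 hA, hschur]
  exact PosSemidef.one.smul (by linarith)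

lemma PosSemidef.sq_apply_le {A : Matrix ι ι ℝ} (hA : A.PosSemidef) (i j : ι) :
    A i j ^ 2 ≤ A i i * A j j := by
  have h := (hA.submatrix ![i, j]).det_nonneg
  have hji : A j i = A i j := by simpa using hA.isHermitian.apply i j
  rw [det_fin_two] at h
  simp only [submatrix_apply, cons_val_zero, cons_val_one, hji] at h
  nlinarith

end Real

lemma exists_isUnit_det_eq_smul_row {n : ℕ} {v : Fin n → ℤ} (hv : v ≠ 0) (i : Fin n) :
    ∃ (g : ℤ) (A : Matrix (Fin n) (Fin n) ℤ), IsUnit A.det ∧ v = g • A i := by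
  obtain ⟨m, snf⟩ := (Submodule.span ℤ {v}).smithNormalForm (Pi.basisFun ℤ (Fin n))
  obtain rfl : 1 = m := by
    simpa [finrank_span_set_eq_card (LinearIndepOn.singleton (v := id) hv)] using
      Module.finrank_eq_card_basis snf.bN
  obtain ⟨c, hc⟩ : ∃ c : ℤ, v = c • (snf.bN 0 : Fin n → ℤ) := by
    refine ⟨snf.bN.repr ⟨v, Submodule.mem_span_singleton_self v⟩ 0, ?_⟩
    simpa using congrArg Subtype.val
      (snf.bN.sum_repr ⟨v, Submodule.mem_span_singleton_self v⟩).symm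
  set b := snf.bM.reindex (Equiv.swap i (snf.f 0))
  refine ⟨c * snf.a 0, of b, ?_, ?_⟩
  · rw [← Pi.basisFun_det_apply]
    exact (Pi.basisFun ℤ (Fin n)).is_basis_iff_det.mp ⟨b.linearIndependent, b.span_eq⟩
  · have hb : of b i = snf.bM (snf.f 0) := by
      change b i = _
      simp [b]
    rw [hb, mul_smul, ← snf.snf 0, ← hc]

section Hermite
variable {n : ℕ}

lemma PosDef.exists_isUnit_det_intConj_corner_le {Q : Matrix (Fin (n + 1)) (Fin (n + 1)) ℝ}
    (hQ : Q.PosDef) : ∃ A : Matrix (Fin (n + 1)) (Fin (n + 1)) ℤ, IsUnit A.det ∧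
      ∀ x : Fin (n + 1) → ℤ, x ≠ 0 →
        intConj A Q 0 0 ≤ (Int.cast ∘ x) ⬝ᵥ intConj A Q *ᵥ (Int.cast ∘ x) := by
  set q : (Fin (n + 1) → ℤ) → ℝ := fun y => (Int.cast ∘ y) ⬝ᵥ Q *ᵥ (Int.cast ∘ y)
  obtain ⟨v, hv, hmin⟩ := hQ.exists_min_intVec
  obtain ⟨g, A, hA, rfl⟩ := exists_isUnit_det_eq_smul_row hv 0
  refine ⟨A, hA, fun x hx => ?_⟩
  have hg : 1 ≤ (g : ℝ) ^ 2 := by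
    have : g ≠ 0 := by rintro rfl; simp at hv
    exact_mod_cast (one_le_sq_iff_one_le_abs _).mpr (Int.one_le_abs this)
  calc intConj A Q 0 0 = q (A 0) := intConj_apply _ _ _ _
    _ ≤ (g : ℝ) ^ 2 * q (A 0) :=
        le_mul_of_one_le_left (by simpa using hQ.posSemidef.dotProduct_mulVec_nonneg _) hg
    _ = q (g • A 0) := by
        simp only [q, intCast_comp_smul, mulVec_smul, dotProduct_smul, smul_dotProduct,
          smul_eq_mul]
        ring
    _ ≤ q (Aᵀ *ᵥ x) := hmin _ (mulVec_ne_zero_of_isUnit_det (by rwa [det_transpose]) hx)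
    _ = _ := (dotProduct_intConj_mulVec _ _ _).symm

lemma exists_lowerBordered_intConj_diag_le {Y : Matrix (Fin (n + 1)) (Fin (n + 1)) ℝ}
    (hY : Y.PosDef)
    (hmin : ∀ x : Fin (n + 1) → ℤ, x ≠ 0 → Y 0 0 ≤ (Int.cast ∘ x) ⬝ᵥ Y *ᵥ (Int.cast ∘ x))
    {V : Matrix (Fin n) (Fin n) ℤ} (hV : IsUnit V.det) :
    ∃ W : Matrix (Fin (n + 1)) (Fin (n + 1)) ℤ, IsUnit W.det ∧ intConj W Y 0 0 = Y 0 0 ∧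
      ∀ i, intConj W Y i.succ i.succ ≤ 4 / 3 * intConj V (schurComplZero Y) i i := by
  -- `W` keeps the first basis vector and lifts each `V i`, choosing the coefficient `s i` of the
  -- lift along the first vector by rounding (size reduction).
  have hsymm : Y.IsSymm := isHermitian_iff_isSymm.mp hY.isHermitian
  set m := Y 0 0
  have hm : 0 < m := hY.diag_pos
  set t : Fin n → ℝ := fun i => (fun j : Fin n => Y 0 j.succ) ⬝ᵥ (Int.cast ∘ V i)
  set s : Fin n → ℤ := fun i => -round (t i / m)
  have hW : IsUnit (lowerBordered 1 s V).det := by rwa [det_lowerBordered, one_mul]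
  refine ⟨lowerBordered 1 s V, hW, ?_, fun i => ?_⟩
  · rw [intConj_apply, lowerBordered_zero, intCast_comp_vecCons, cons_dotProduct_mulVec_cons]
    simp [m]
  have hsq : intConj (lowerBordered 1 s V) Y i.succ i.succ =
      m * ((s i : ℝ) + t i / m) ^ 2 + intConj V (schurComplZero Y) i i := by
    rw [intConj_apply, intConj_apply, lowerBordered_succ, intCast_comp_vecCons,
      cons_dotProduct_mulVec_cons_eq_schurComplZero hsymm hm.ne']
  have hround : ((s i : ℝ) + t i / m) ^ 2 ≤ 1 / 4 := by
    rw [← sq_abs]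
    calc |(s i : ℝ) + t i / m| ^ 2 ≤ (1 / 2) ^ 2 := by
          gcongr
          simpa [s, add_comm, ← sub_eq_add_neg] using abs_sub_round (t i / m)
      _ = 1 / 4 := by norm_num
  have hge : m ≤ intConj (lowerBordered 1 s V) Y i.succ i.succ := by
    rw [intConj_apply]
    exact hmin _ (row_ne_zero_of_isUnit_det hW i.succ)
  nlinarith

end Hermite

/-- Hermite's reduction, with the constant `4 ^ n ^ 2` in place of `(4 / 3) ^ (n (n - 1) / 2)`. -/
theorem PosDef.exists_isUnit_det_prod_diag_intConj_le :
    ∀ {n : ℕ} {Q : Matrix (Fin n) (Fin n) ℝ}, Q.PosDef →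
      ∃ U : Matrix (Fin n) (Fin n) ℤ, IsUnit U.det ∧ ∏ i, intConj U Q i i ≤ 4 ^ n ^ 2 * Q.det
  | 0, Q, _ => ⟨1, by simp, by simp⟩
  | n + 1, Q, hQ => by
    obtain ⟨A, hA, hmin⟩ := hQ.exists_isUnit_det_intConj_corner_le
    set Y := intConj A Q
    have hY : Y.PosDef := hQ.intConj_of_isUnit_det hA
    obtain ⟨V, hV, hVprod⟩ := exists_isUnit_det_prod_diag_intConj_le hY.schurComplZero
    obtain ⟨W, hW, hW₀, hWsucc⟩ := exists_lowerBordered_intConj_diag_le hY hmin hV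
    refine ⟨W * A, by rw [det_mul]; exact hW.mul hA, ?_⟩
    have hdet : Q.det = Y 0 0 * Y.schurComplZero.det := by
      rw [← det_intConj hA Q, det_eq_mul_det_schurComplZero _ hY.diag_pos.ne']
    rw [intConj_mul, Fin.prod_univ_succ, hW₀]
    calc Y 0 0 * ∏ i : Fin n, intConj W Y i.succ i.succ
        ≤ Y 0 0 * ∏ i : Fin n, (4 / 3 * intConj V Y.schurComplZero i i) := by
          gcongr with i
          · exact hY.diag_pos.le
          · exact fun i _ => (hY.intConj_of_isUnit_det hW).diag_pos.le
          · exact hWsucc i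
      _ = (4 / 3) ^ n * (Y 0 0 * ∏ i, intConj V Y.schurComplZero i i) := by
          rw [Finset.prod_mul_distrib, Finset.prod_const, Finset.card_univ, Fintype.card_fin]
          ring
      _ ≤ (4 / 3) ^ n * (Y 0 0 * (4 ^ n ^ 2 * Y.schurComplZero.det)) := by
          gcongr
          exact hY.diag_pos.le
      _ = (4 / 3) ^ n * 4 ^ n ^ 2 * Q.det := by rw [hdet]; ring
      _ ≤ 4 ^ (n + 1) ^ 2 * Q.det := by
          gcongr
          · exact hQ.det_pos.le
          · calc (4 / 3 : ℝ) ^ n * 4 ^ n ^ 2 ≤ 4 ^ n * 4 ^ n ^ 2 := by gcongr; norm_num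
              _ ≤ 4 ^ (n + 1) ^ 2 := by
                rw [← pow_add]
                exact pow_le_pow_right₀ (by norm_num) (by nlinarith)

end Matrix

section IntPSD
variable {n : ℕ}

lemma IsIntPSD.isSymm {X : Matrix (Fin n) (Fin n) ℤ} (hX : IsIntPSD X) : X.IsSymm :=
  IsSymm.ext fun i j => by simpa using (isHermitian_iff_isSymm.mp hX.isHermitian).apply i j

lemma IsIntPSD.mul_mul_transpose {m : ℕ} {X : Matrix (Fin n) (Fin n) ℤ} (hX : IsIntPSD X)
    (U : Matrix (Fin m) (Fin n) ℤ) : IsIntPSD (U * X * Uᵀ) := by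
  rw [IsIntPSD, intCast_mul_mul_transpose, intConj, ← conjTranspose_eq_transpose_of_trivial]
  exact hX.mul_mul_conjTranspose_same _

lemma IsIntPSD.posDef_of_det_ne_zero {X : Matrix (Fin n) (Fin n) ℤ} (hX : IsIntPSD X)
    (hdet : X.det ≠ 0) : (X.map (Int.cast : ℤ → ℝ)).PosDef :=
  hX.posDef_iff_det_ne_zero.mpr (by rw [← Int.cast_det]; exact_mod_cast hdet)

lemma IsIntPSD.lowerBordered_zero_zero {X : Matrix (Fin n) (Fin n) ℤ} (hX : IsIntPSD X) :
    IsIntPSD (lowerBordered 0 0 X) := by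
  rw [IsIntPSD, lowerBordered_map _ _ _ _ Int.cast_zero]
  simpa using PosSemidef.lowerBordered_zero_zero hX

lemma IsSporadicPSD.of_mul_mul_transpose {X U : Matrix (Fin n) (Fin n) ℤ} (hU : IsUnit U.det)
    (hX : IsSporadicPSD (U * X * Uᵀ)) : IsSporadicPSD X := by
  rintro ⟨x, hx, hpsd⟩
  refine hX ⟨U *ᵥ x, mulVec_ne_zero_of_isUnit_det hU hx, ?_⟩
  rw [show U * X * Uᵀ - vecMulVec (U *ᵥ x) (U *ᵥ x) = U * (X - vecMulVec x x) * Uᵀ by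
    rw [Matrix.mul_sub, Matrix.sub_mul, mul_vecMulVec, vecMulVec_mul, vecMul_transpose]]
  exact hpsd.mul_mul_transpose U

lemma isSporadicPSD_mul_mul_transpose_iff {X U : Matrix (Fin n) (Fin n) ℤ} (hU : IsUnit U.det) :
    IsSporadicPSD (U * X * Uᵀ) ↔ IsSporadicPSD X :=
  ⟨IsSporadicPSD.of_mul_mul_transpose hU, fun hX => .of_mul_mul_transpose
    (isUnit_nonsing_inv_det U hU) (by rwa [nonsing_inv_mul_mul_transpose_cancel hU])⟩

lemma IsSporadicPSD.of_lowerBordered_zero_zero {X : Matrix (Fin n) (Fin n) ℤ}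
    (hX : IsSporadicPSD (lowerBordered 0 0 X)) : IsSporadicPSD X := by
  rintro ⟨x, hx, hpsd⟩
  refine hX ⟨vecCons 0 x, fun h => hx (funext fun i => by simpa using congrFun h i.succ), ?_⟩
  rw [show lowerBordered 0 0 X - vecMulVec (vecCons 0 x) (vecCons 0 x) =
      lowerBordered 0 0 (X - vecMulVec x x) by
    ext i j
    cases i using Fin.cases <;> cases j using Fin.cases <;> simp [vecMulVec_apply]]
  exact hpsd.lowerBordered_zero_zero

lemma IsSporadicPSD.exists_eq_lowerBordered {X : Matrix (Fin (n + 1)) (Fin (n + 1)) ℤ}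
    (hX : IsIntPSD X) (hs : IsSporadicPSD X) (hdet : X.det = 0) :
    ∃ (A : Matrix (Fin (n + 1)) (Fin (n + 1)) ℤ) (X₁ : Matrix (Fin n) (Fin n) ℤ),
      IsUnit A.det ∧ A * X * Aᵀ = lowerBordered 0 0 X₁ ∧ IsIntPSD X₁ ∧ IsSporadicPSD X₁ := by
  obtain ⟨v, hv, hXv⟩ := exists_mulVec_eq_zero_iff.mpr hdet
  obtain ⟨g, A, hA, rfl⟩ := exists_isUnit_det_eq_smul_row hv 0
  have hXA : X *ᵥ A 0 = 0 := by
    rw [mulVec_smul] at hXv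
    exact (smul_eq_zero.mp hXv).resolve_left (by rintro rfl; simp at hv)
  have hAXA : A * X * Aᵀ = lowerBordered 0 0 ((A * X * Aᵀ).submatrix Fin.succ Fin.succ) := by
    ext i j
    rw [mul_mul_transpose_apply]
    cases i using Fin.cases <;> cases j using Fin.cases <;>
      simp [dotProduct_mulVec, ← mulVec_transpose, hX.isSymm.eq, hXA, mul_mul_transpose_apply]
  refine ⟨A, _, hA, hAXA, PosSemidef.submatrix (hX.mul_mul_transpose A) Fin.succ,
    .of_lowerBordered_zero_zero ?_⟩
  rwa [← hAXA, isSporadicPSD_mul_mul_transpose_iff hA]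

lemma IsSporadicPSD.det_le {X : Matrix (Fin n) (Fin n) ℤ} (hs : IsSporadicPSD X)
    (hX : (X.map (Int.cast : ℤ → ℝ)).PosDef) : X.det ≤ 4 ^ n ^ 2 := by
  set Q := X.map (Int.cast : ℤ → ℝ)
  by_contra! hlt
  have hQ : (4 : ℝ) ^ n ^ 2 < Q.det := by rw [← Int.cast_det]; exact_mod_cast hlt
  obtain ⟨U, hU, hprod⟩ := hX.inv.exists_isUnit_det_prod_diag_intConj_le
  obtain ⟨i, hi⟩ : ∃ i, intConj U Q⁻¹ i i < 1 := by
    by_contra! h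
    have h1 := Finset.one_le_prod (s := Finset.univ) fun i _ => h i
    rw [det_nonsing_inv, Ring.inverse_eq_inv', ← div_eq_mul_inv] at hprod
    have h2 : 4 ^ n ^ 2 / Q.det < 1 := (div_lt_one hX.det_pos).mpr hQ
    linarith
  refine hs ⟨U i, row_ne_zero_of_isUnit_det hU i, ?_⟩
  have hmap : (X - vecMulVec (U i) (U i)).map (Int.cast : ℤ → ℝ) =
      Q - vecMulVec (Int.cast ∘ U i) (Int.cast ∘ U i) := by
    ext j k
    simp [Q, vecMulVec_apply]
  rw [IsIntPSD, hmap]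
  exact hX.posSemidef_sub_vecMulVec (by rw [← intConj_apply]; exact hi.le)

lemma exists_isUnit_det_abs_mul_mul_transpose_le {X : Matrix (Fin n) (Fin n) ℤ}
    (hX : (X.map (Int.cast : ℤ → ℝ)).PosDef) : ∃ U : Matrix (Fin n) (Fin n) ℤ, IsUnit U.det ∧
      ∀ i j, |(U * X * Uᵀ) i j| ≤ 4 ^ n ^ 2 * X.det := by
  obtain ⟨U, hU, hprod⟩ := hX.exists_isUnit_det_prod_diag_intConj_le
  set M := U * X * Uᵀ
  have hM : M.map (Int.cast : ℤ → ℝ) = intConj U (X.map Int.cast) :=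
    intCast_mul_mul_transpose U X
  have hMpos : (M.map (Int.cast : ℤ → ℝ)).PosDef := hM ▸ hX.intConj_of_isUnit_det hU
  have hdiag : ∀ i, 0 < M i i := fun i => by simpa using hMpos.diag_pos (i := i)
  have hprodM : ∏ i, M i i ≤ 4 ^ n ^ 2 * X.det := by
    rw [← hM, ← Int.cast_det] at hprod
    simp only [map_apply] at hprod
    exact_mod_cast hprod
  have hle : ∀ i, M i i ≤ 4 ^ n ^ 2 * X.det := fun i =>
    (Int.le_of_dvd (Finset.prod_pos fun j _ => hdiag j)
      (Finset.dvd_prod_of_mem _ (Finset.mem_univ i))).trans hprodM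
  refine ⟨U, hU, fun i j => abs_le_of_sq_le_sq ?_ ((hdiag i).le.trans (hle i))⟩
  have hsq : M i j ^ 2 ≤ M i i * M j j := by
    have := hMpos.posSemidef.sq_apply_le i j
    simp only [map_apply] at this
    exact_mod_cast this
  nlinarith [hdiag i, hdiag j, hle i, hle j]

theorem exists_bound_of_isSporadicPSD :
    ∀ n : ℕ, ∃ C : ℤ, ∀ X : Matrix (Fin n) (Fin n) ℤ, IsIntPSD X → IsSporadicPSD X →
      ∃ U : Matrix (Fin n) (Fin n) ℤ, IsUnit U.det ∧ ∀ i j, |(U * X * Uᵀ) i j| ≤ C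
  | 0 => ⟨0, fun _ _ _ => ⟨1, by simp, fun i => i.elim0⟩⟩
  | n + 1 => by
    obtain ⟨C, hC⟩ := exists_bound_of_isSporadicPSD n
    refine ⟨max C (4 ^ (n + 1) ^ 2 * 4 ^ (n + 1) ^ 2), fun X hX hs => ?_⟩
    by_cases hdet : X.det = 0
    · obtain ⟨A, X₁, hA, hAXA, hX₁, hs₁⟩ := hs.exists_eq_lowerBordered hX hdet
      obtain ⟨U₁, hU₁, hbound⟩ := hC X₁ hX₁ hs₁
      refine ⟨lowerBordered 1 0 U₁ * A, by simp [det_lowerBordered, hU₁.mul hA], fun i j => ?_⟩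
      have hconj : lowerBordered 1 0 U₁ * A * X * (lowerBordered 1 0 U₁ * A)ᵀ =
          lowerBordered 0 0 (U₁ * X₁ * U₁ᵀ) := by
        rw [show lowerBordered 1 0 U₁ * A * X * (lowerBordered 1 0 U₁ * A)ᵀ =
            lowerBordered 1 0 U₁ * (A * X * Aᵀ) * (lowerBordered 1 0 U₁)ᵀ by
          simp only [transpose_mul, Matrix.mul_assoc],
          hAXA, lowerBordered_transpose_zero, lowerBordered_mul, lowerBordered_mul]
        simp
      rw [hconj]
      cases i using Fin.cases <;> cases j using Fin.cases <;>
        simp [le_max_of_le_left (hbound _ _)]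
    · have hXpos := hX.posDef_of_det_ne_zero hdet
      obtain ⟨U, hU, hbound⟩ := exists_isUnit_det_abs_mul_mul_transpose_le hXpos
      refine ⟨U, hU, fun i j => le_max_of_le_right ((hbound i j).trans ?_)⟩
      gcongr
      exact hs.det_le hXpos

end IntPSD

theorem sporadic_psd_finitely_many_unimodular_orbits_general (n : ℕ) :
    ∃ R : Finset (Matrix (Fin n) (Fin n) ℤ),
      (∀ M ∈ R, IsIntPSD M ∧ IsSporadicPSD M) ∧
      ∀ X : Matrix (Fin n) (Fin n) ℤ, IsIntPSD X → IsSporadicPSD X →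
        ∃ M ∈ R, ∃ U : Matrix (Fin n) (Fin n) ℤ, IsUnit U.det ∧
          X = U * M * U.transpose := by
  obtain ⟨C, hC⟩ := exists_bound_of_isSporadicPSD n
  have hfin : {M : Matrix (Fin n) (Fin n) ℤ |
      (∀ i j, |M i j| ≤ C) ∧ IsIntPSD M ∧ IsSporadicPSD M}.Finite :=
    (Set.finite_Icc (fun _ _ => -C) fun _ _ => C).subset fun M hM =>
      ⟨fun i j => (abs_le.mp (hM.1 i j)).1, fun i j => (abs_le.mp (hM.1 i j)).2⟩
  refine ⟨hfin.toFinset, fun M hM => (hfin.mem_toFinset.mp hM).2, fun X hX hs => ?_⟩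
  obtain ⟨U, hU, hbound⟩ := hC X hX hs
  refine ⟨U * X * Uᵀ, hfin.mem_toFinset.mpr ⟨hbound, hX.mul_mul_transpose U,
    (isSporadicPSD_mul_mul_transpose_iff hU).mpr hs⟩, U⁻¹, isUnit_nonsing_inv_det U hU,
    (nonsing_inv_mul_mul_transpose_cancel hU X).symm⟩

/-- For every `n ≥ 1` there are finitely many sporadic matrices in
`S^n_+(ℤ)` up to unimodular equivalence `X ↦ U X Uᵀ`, `U ∈ GL(n,ℤ)`. -/
theorem sporadic_psd_finitely_many_unimodular_orbits (n : ℕ) (hn : 1 ≤ n) :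
    ∃ R : Finset (Matrix (Fin n) (Fin n) ℤ),
      (∀ M ∈ R, IsIntPSD M ∧ IsSporadicPSD M) ∧
      ∀ X : Matrix (Fin n) (Fin n) ℤ, IsIntPSD X → IsSporadicPSD X →
        ∃ M ∈ R, ∃ U : Matrix (Fin n) (Fin n) ℤ, IsUnit U.det ∧
          X = U * M * U.transpose :=
  sporadic_psd_finitely_many_unimodular_orbits_general n
end

section
/- Let n ≥ 3 and suppose s ∈ T_n is a primitive sporadic point with nonnegative entries such that s_n > 1 and s_i ≠ 0 for some i ∈ {1,…,n−1}. Then s_n = ⌈√(s₁² + s₂² + ⋯ + s_{n−1}²)⌉. -/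
open Matrix

/-- Membership in `T_N = SOC(N) ∩ ℤ^N` (dimension `N = n+1`). -/
def memT {n : ℕ} (s : Fin (n + 1) → ℤ) : Prop :=
  0 ≤ s (Fin.last n) ∧ (∑ i : Fin n, s i.castSucc ^ 2) ≤ s (Fin.last n) ^ 2

/-- The bilinear form `⟨a,b⟩ = a₁b₁ + ⋯ + a_{N-1}b_{N-1} - a_N b_N`. -/
def socForm {n : ℕ} (a b : Fin (n + 1) → ℤ) : ℤ :=
  (∑ i : Fin n, a i.castSucc * b i.castSucc) - a (Fin.last n) * b (Fin.last n)

/-- A point `s ∈ T_N` is sporadic if no nonzero Pythagorean tuple can be subtracted. -/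
def socSporadic {n : ℕ} (s : Fin (n + 1) → ℤ) : Prop :=
  ¬ ∃ p : Fin (n + 1) → ℤ, p ≠ 0 ∧ memT p ∧ socForm p p = 0 ∧ memT (s - p)

/-- The matrix `A_N` (of Definition 5 of the paper), for dimension `N = n+1`. -/
def Amat (n : ℕ) : Matrix (Fin (n + 1)) (Fin (n + 1)) ℤ :=
  fun i j =>
    if n + 1 = 3 then
      (if (j : ℕ) = 2 then (if (i : ℕ) = 2 then 3 else 2)
       else if (i : ℕ) = (j : ℕ) then -1 else -2)
    else
      (if (i : ℕ) < 3 ∧ (j : ℕ) < 3 then (if i = j then 0 else -1)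
       else if (i : ℕ) < 3 ∧ j = Fin.last n then 1
       else if i = Fin.last n ∧ (j : ℕ) < 3 then -1
       else if i = Fin.last n ∧ j = Fin.last n then 2
       else if i = j then 1 else 0)

/-- The diagonal matrix `Q_k` flipping the sign of the `k`-th coordinate. -/
def Qmat {n : ℕ} (k : Fin n) : Matrix (Fin n) (Fin n) ℤ :=
  Matrix.diagonal fun i => if i = k then -1 else 1

/-- `A_N⁺ = Q₁ Q₂ ⋯ Q_{N-1} A_N`, i.e. the product of `A_N` with the diagonal matrix
flipping the signs of the first `N - 1` coordinates. -/
def AmatPlus (n : ℕ) : Matrix (Fin (n + 1)) (Fin (n + 1)) ℤ :=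
  (Matrix.diagonal fun i : Fin (n + 1) => if i = Fin.last n then 1 else -1) * Amat n

/-- An integer vector is primitive if the gcd of its coordinates is `1`. -/
def primitiveVec {n : ℕ} (s : Fin n → ℤ) : Prop :=
  Finset.univ.gcd s = 1


/-- A primitive sporadic `s ∈ T_N` (`N = n+1 ≥ 3`) with nonnegative
entries, height `s_N > 1`, and some nonzero non-last coordinate satisfies
`s_N = ⌈√(s₁² + ⋯ + s_{N-1}²)⌉`. -/
theorem sporadic_height_eq_ceil_sqrt
    (n : ℕ) (h3 : 2 ≤ n) (s : Fin (n + 1) → ℤ)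
    (hs : memT s) (hspor : socSporadic s) (hprim : primitiveVec s)
    (hnonneg : ∀ i, 0 ≤ s i)
    (hheight : 1 < s (Fin.last n))
    (hnz : ∃ i : Fin n, s i.castSucc ≠ 0) :
    s (Fin.last n) = ⌈Real.sqrt (∑ i : Fin n, ((s i.castSucc : ℝ)) ^ 2)⌉ := by
  obtain ⟨j, hj⟩ := hnz
  have hj1 : 1 ≤ s j.castSucc := lt_of_le_of_ne (hnonneg _) (Ne.symm hj)
  obtain ⟨hN0, hsum⟩ := hs
  have key : (s (Fin.last n) - 1) ^ 2 < ∑ i : Fin n, s i.castSucc ^ 2 := by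
    by_contra hk
    push_neg at hk
    apply hspor
    set p : Fin (n + 1) → ℤ := Fin.snoc (fun i : Fin n => if i = j then (1 : ℤ) else 0) 1 with hp
    have hpc : ∀ i : Fin n, p i.castSucc = if i = j then 1 else 0 := by
      intro i; rw [hp, Fin.snoc_castSucc]
    have hpl : p (Fin.last n) = 1 := by rw [hp, Fin.snoc_last]
    refine ⟨p, ?_, ?_, ?_, ?_⟩
    · intro h
      have := congrFun h (Fin.last n)
      rw [hpl] at this
      simp at this
    · refine ⟨by rw [hpl]; norm_num, ?_⟩
      have : ∀ i : Fin n, p i.castSucc ^ 2 = if i = j then 1 else 0 := by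
        intro i; rw [hpc]; split <;> norm_num
      rw [hpl, Finset.sum_congr rfl fun i _ => this i,
        Finset.sum_ite_eq' Finset.univ j fun _ => (1 : ℤ)]
      simp
    · unfold socForm
      have : ∀ i : Fin n, p i.castSucc * p i.castSucc = if i = j then 1 else 0 := by
        intro i; rw [hpc]; split <;> norm_num
      rw [hpl, Finset.sum_congr rfl fun i _ => this i,
        Finset.sum_ite_eq' Finset.univ j fun _ => (1 : ℤ)]
      simp
    · refine ⟨?_, ?_⟩
      · simp only [Pi.sub_apply]; rw [hpl]; omega
      · have expand : ∀ i : Fin n,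
            ((s - p) i.castSucc) ^ 2
              = s i.castSucc ^ 2 - (if i = j then 2 * s i.castSucc - 1 else 0) := by
          intro i
          simp only [Pi.sub_apply]
          rw [hpc]
          split <;> ring
        rw [Finset.sum_congr rfl fun i _ => expand i, Finset.sum_sub_distrib,
          Finset.sum_ite_eq' Finset.univ j fun i => 2 * s i.castSucc - 1]
        simp only [Pi.sub_apply, Finset.mem_univ, if_true]
        rw [hpl]
        nlinarith [hk]
  have hx0 : (0 : ℝ) ≤ ∑ i : Fin n, ((s i.castSucc : ℝ)) ^ 2 :=
    Finset.sum_nonneg fun i _ => sq_nonneg _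
  have hcast : ((∑ i : Fin n, s i.castSucc ^ 2 : ℤ) : ℝ) = ∑ i : Fin n, ((s i.castSucc : ℝ)) ^ 2 := by
    push_cast; rfl
  have hN0' : (0 : ℝ) ≤ (s (Fin.last n) : ℝ) := by exact_mod_cast hN0
  have h1 : Real.sqrt (∑ i : Fin n, ((s i.castSucc : ℝ)) ^ 2) ≤ (s (Fin.last n) : ℝ) := by
    rw [show (s (Fin.last n) : ℝ) = Real.sqrt ((s (Fin.last n) : ℝ) ^ 2) by
      rw [Real.sqrt_sq hN0']]
    apply Real.sqrt_le_sqrt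
    rw [← hcast]
    exact_mod_cast hsum
  have h2 : (s (Fin.last n) : ℝ) - 1 < Real.sqrt (∑ i : Fin n, ((s i.castSucc : ℝ)) ^ 2) := by
    rw [Real.lt_sqrt (by exact_mod_cast (by omega : (0:ℤ) ≤ s (Fin.last n) - 1))]
    rw [← hcast]
    exact_mod_cast key
  symm
  rw [Int.ceil_eq_iff]
  exact ⟨by exact_mod_cast h2, h1⟩
end

section
/- Let n ≥ 3 and let s ∈ T_n. If ⟨s,s⟩ = −1, then s is sporadic. -/
open Matrix

/-!
Write `s = p + q` with `p` a nonzero isotropic point of `T_n` and `q ∈ T_n`. By bilinearity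
`-1 = ⟨s,s⟩ = 2⟨p,q⟩ + ⟨q,q⟩`, and both terms are `≤ 0` because the cone is self-polar under the
Lorentzian form (reverse Cauchy–Schwarz). Integrality forces `⟨p,q⟩ = 0` and `⟨q,q⟩ = -1`, but an
isotropic vector orthogonal to a timelike one vanishes.
-/

section SocForm

variable {n : ℕ}

lemma socForm_add_self (p q : Fin (n + 1) → ℤ) :
    socForm (p + q) (p + q) = socForm p p + 2 * socForm p q + socForm q q := by
  simp only [socForm, Pi.add_apply, add_mul, mul_add, Finset.sum_add_distrib]
  have hcomm : ∑ i : Fin n, q i.castSucc * p i.castSucc =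
      ∑ i : Fin n, p i.castSucc * q i.castSucc :=
    Finset.sum_congr rfl fun i _ => mul_comm _ _
  rw [hcomm]
  ring

lemma socForm_self_nonpos {q : Fin (n + 1) → ℤ} (hq : memT q) : socForm q q ≤ 0 := by
  simp only [socForm, ← sq]
  linarith [hq.2]

lemma socForm_nonpos_of_memT {p q : Fin (n + 1) → ℤ} (hp : memT p) (hq : memT q) :
    socForm p q ≤ 0 := by
  have hcs : (∑ i : Fin n, p i.castSucc * q i.castSucc) ^ 2 ≤
      (p (Fin.last n) * q (Fin.last n)) ^ 2 :=
    calc _ ≤ (∑ i : Fin n, p i.castSucc ^ 2) * ∑ i : Fin n, q i.castSucc ^ 2 :=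
          Finset.sum_mul_sq_le_sq_mul_sq _ _ _
      _ ≤ p (Fin.last n) ^ 2 * q (Fin.last n) ^ 2 :=
          mul_le_mul hp.2 hq.2 (Finset.sum_nonneg fun i _ => sq_nonneg _) (sq_nonneg _)
      _ = _ := (mul_pow _ _ _).symm
  have := (abs_le_of_sq_le_sq' hcs (mul_nonneg hp.1 hq.1)).2
  simp only [socForm]
  linarith

lemma eq_zero_of_socForm_self_eq_zero_of_orthogonal {p q : Fin (n + 1) → ℤ}
    (hpp : socForm p p = 0) (hpq : socForm p q = 0) (hqq : socForm q q < 0) : p = 0 := by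
  simp only [socForm, ← sq, sub_eq_zero] at hpp hpq hqq
  have hcs := Finset.sum_mul_sq_le_sq_mul_sq Finset.univ (fun i : Fin n => p i.castSucc)
    (fun i => q i.castSucc)
  rw [hpq, hpp, mul_pow] at hcs
  -- `hcs` reads `p_N² q_N² ≤ p_N² ∑ q_i²`, while `∑ q_i² < q_N²`.
  have hlast : p (Fin.last n) = 0 := by nlinarith [sq_nonneg (p (Fin.last n))]
  have hinit : ∀ i : Fin n, p i.castSucc = 0 := by
    rw [hlast, zero_pow two_ne_zero, Finset.sum_eq_zero_iff_of_nonneg fun i _ => sq_nonneg _]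
      at hpp
    exact fun i => pow_eq_zero_iff two_ne_zero |>.mp (hpp i (Finset.mem_univ i))
  funext i
  exact Fin.lastCases hlast hinit i

end SocForm

theorem sporadic_of_socForm_eq_neg_one_general
    (n : ℕ) (s : Fin (n + 1) → ℤ)
    (hform : socForm s s = -1) :
    socSporadic s := by
  rintro ⟨p, hp0, hp, hpp, hq⟩
  have hexpand := socForm_add_self p (s - p)
  rw [add_sub_cancel, hform, hpp] at hexpand
  have hpq_nonpos := socForm_nonpos_of_memT hp hq
  have hqq_nonpos := socForm_self_nonpos hq
  have hpq : socForm p (s - p) = 0 := by omega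
  have hqq : socForm (s - p) (s - p) < 0 := by omega
  exact hp0 (eq_zero_of_socForm_self_eq_zero_of_orthogonal hpp hpq hqq)

/-- If `s ∈ T_N` (`N = n+1 ≥ 3`) satisfies `⟨s,s⟩ = -1`, then `s` is
sporadic. -/
theorem sporadic_of_socForm_eq_neg_one
    (n : ℕ) (h3 : 2 ≤ n) (s : Fin (n + 1) → ℤ)
    (hs : memT s) (hform : socForm s s = -1) :
    socSporadic s :=
  sporadic_of_socForm_eq_neg_one_general n s hform
end

section
/- Let 3 ≤ n < 7 and let s ∈ T_n. If s is a primitive sporadic point, then ⟨s,s⟩ = −1. -/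
open Matrix

namespace SOCAux

variable {n : ℕ}

lemma memT_iff (x : Fin (n+1) → ℤ) :
    memT x ↔ 0 ≤ x (Fin.last n) ∧ socForm x x ≤ 0 := by
  unfold memT socForm
  have e : ∀ i : Fin n, x i.castSucc * x i.castSucc = x i.castSucc ^ 2 := fun i => (sq _).symm
  rw [Finset.sum_congr rfl (fun i _ => e i)]
  constructor
  · rintro ⟨h1, h2⟩; exact ⟨h1, by nlinarith⟩
  · rintro ⟨h1, h2⟩; exact ⟨h1, by nlinarith⟩

lemma socForm_comm (x y : Fin (n+1) → ℤ) : socForm x y = socForm y x := by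
  unfold socForm
  rw [Finset.sum_congr rfl (fun i _ => mul_comm (x i.castSucc) (y i.castSucc)), mul_comm]

lemma socForm_add_left (x y z : Fin (n+1) → ℤ) :
    socForm (x + y) z = socForm x z + socForm y z := by
  unfold socForm
  simp only [Pi.add_apply, add_mul, Finset.sum_add_distrib]
  ring

lemma socForm_smul_left (c : ℤ) (x z : Fin (n+1) → ℤ) :
    socForm (c • x) z = c * socForm x z := by
  unfold socForm
  simp only [Pi.smul_apply, smul_eq_mul, mul_assoc, ← Finset.mul_sum]
  ring

lemma socForm_sub_left (x y z : Fin (n+1) → ℤ) :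
    socForm (x - y) z = socForm x z - socForm y z := by
  unfold socForm
  simp only [Pi.sub_apply, sub_mul, Finset.sum_sub_distrib]
  ring

lemma socForm_add_right (x y z : Fin (n+1) → ℤ) :
    socForm z (x + y) = socForm z x + socForm z y := by
  rw [socForm_comm, socForm_add_left, socForm_comm x z, socForm_comm y z]

lemma socForm_smul_right (c : ℤ) (x z : Fin (n+1) → ℤ) :
    socForm z (c • x) = c * socForm z x := by
  rw [socForm_comm, socForm_smul_left, socForm_comm x z]

lemma socForm_sub_right (x y z : Fin (n+1) → ℤ) :
    socForm z (x - y) = socForm z x - socForm z y := by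
  rw [socForm_comm, socForm_sub_left, socForm_comm x z, socForm_comm y z]

lemma socForm_zero_left (z : Fin (n+1) → ℤ) : socForm 0 z = 0 := by
  unfold socForm; simp

lemma socForm_self (x : Fin (n+1) → ℤ) :
    socForm x x = (∑ i : Fin n, x i.castSucc ^ 2) - x (Fin.last n) ^ 2 := by
  unfold socForm
  have e : ∀ i : Fin n, x i.castSucc * x i.castSucc = x i.castSucc ^ 2 := fun i => (sq _).symm
  rw [Finset.sum_congr rfl (fun i _ => e i), sq]

lemma socCS (x v : Fin (n+1) → ℤ) :
    (socForm x v + x (Fin.last n) * v (Fin.last n)) ^ 2 ≤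
      (socForm x x + x (Fin.last n) ^ 2) * (socForm v v + v (Fin.last n) ^ 2) := by
  have h := Finset.sum_mul_sq_le_sq_mul_sq Finset.univ
      (fun i : Fin n => x i.castSucc) (fun i : Fin n => v i.castSucc)
  unfold socForm
  have e1 : ∀ i : Fin n, x i.castSucc * x i.castSucc = x i.castSucc ^ 2 := fun i => (sq _).symm
  have e2 : ∀ i : Fin n, v i.castSucc * v i.castSucc = v i.castSucc ^ 2 := fun i => (sq _).symm
  rw [Finset.sum_congr rfl (fun i _ => e1 i), Finset.sum_congr rfl (fun i _ => e2 i)]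
  have hx2 : x (Fin.last n) * x (Fin.last n) = x (Fin.last n) ^ 2 := (sq _).symm
  have hv2 : v (Fin.last n) * v (Fin.last n) = v (Fin.last n) ^ 2 := (sq _).symm
  rw [hx2, hv2]
  simpa using h

/-! ### Reflections -/

def reflMap (v : Fin (n+1) → ℤ) (k : ℤ) (x : Fin (n+1) → ℤ) : Fin (n+1) → ℤ :=
  x - (k * socForm x v) • v

lemma reflMap_sub (v : Fin (n+1) → ℤ) (k : ℤ) (x y : Fin (n+1) → ℤ) :
    reflMap v k (x - y) = reflMap v k x - reflMap v k y := by
  unfold reflMap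
  rw [socForm_sub_left]
  ext j
  simp only [Pi.sub_apply, Pi.smul_apply, smul_eq_mul]
  ring

lemma socForm_reflMap {v : Fin (n+1) → ℤ} {k : ℤ} (hkm : k * socForm v v = 2)
    (x y : Fin (n+1) → ℤ) :
    socForm (reflMap v k x) (reflMap v k y) = socForm x y := by
  unfold reflMap
  rw [socForm_sub_left, socForm_sub_right, socForm_sub_right, socForm_smul_left,
    socForm_smul_right, socForm_smul_left, socForm_smul_right, socForm_comm v y]
  linear_combination (k * socForm x v * socForm y v) * hkm

lemma reflMap_zero (v : Fin (n+1) → ℤ) (k : ℤ) : reflMap v k 0 = 0 := by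
  unfold reflMap
  rw [socForm_zero_left]
  simp

lemma reflMap_invol {v : Fin (n+1) → ℤ} {k : ℤ} (hkm : k * socForm v v = 2)
    (x : Fin (n+1) → ℤ) : reflMap v k (reflMap v k x) = x := by
  have h1 : socForm (reflMap v k x) v = - socForm x v := by
    unfold reflMap
    rw [socForm_sub_left, socForm_smul_left]
    linear_combination (-(socForm x v)) * hkm
  conv_lhs => rw [reflMap, h1]
  unfold reflMap
  ext j
  simp only [Pi.sub_apply, Pi.smul_apply, smul_eq_mul]
  ring

lemma reflMap_last {v : Fin (n+1) → ℤ} (hvl : v (Fin.last n) = 1) (k : ℤ)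
    (x : Fin (n+1) → ℤ) :
    reflMap v k x (Fin.last n) = x (Fin.last n) - k * socForm x v := by
  unfold reflMap
  simp [hvl]

lemma reflMap_memT {v : Fin (n+1) → ℤ} {k : ℤ} (hvl : v (Fin.last n) = 1)
    (hk : 1 ≤ k) (hkm : k * socForm v v = 2) {x : Fin (n+1) → ℤ} (hx : memT x) :
    memT (reflMap v k x) := by
  rw [memT_iff] at hx ⊢
  obtain ⟨hx1, hx2⟩ := hx
  refine ⟨?_, by rw [socForm_reflMap hkm]; exact hx2⟩
  rw [reflMap_last hvl]
  have hm1 : 1 ≤ socForm v v := by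
    by_contra h
    push_neg at h
    nlinarith [hkm, hk]
  have hk2 : k ≤ 2 := by nlinarith [hkm, hk, hm1]
  have hcs := socCS x v
  rw [hvl] at hcs
  have hk12 : k = 1 ∨ k = 2 := by omega
  set t := socForm x v with ht
  set c := x (Fin.last n) with hcdef
  rcases hk12 with hk1 | hk1
  · rw [hk1] at hkm
    have hm2 : socForm v v = 2 := by linarith
    rw [hk1]
    rw [hm2] at hcs
    nlinarith [hcs, hx1, hx2, sq_nonneg (t + c)]
  · rw [hk1] at hkm
    have hm2 : socForm v v = 1 := by linarith
    rw [hk1]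
    rw [hm2] at hcs
    nlinarith [hcs, hx1, hx2, sq_nonneg (t + c)]


/-! ### Basis vectors -/

def evec (i : Fin n) : Fin (n+1) → ℤ := fun j => if j = i.castSucc then 1 else 0

def elast : Fin (n+1) → ℤ := fun j => if j = Fin.last n then 1 else 0

@[simp] lemma evec_last (i : Fin n) : evec i (Fin.last n) = 0 := by
  unfold evec; exact if_neg (Fin.castSucc_lt_last i).ne'

@[simp] lemma elast_last : (elast : Fin (n+1) → ℤ) (Fin.last n) = 1 := if_pos rfl

@[simp] lemma evec_castSucc (i j : Fin n) : evec i j.castSucc = if j = i then 1 else 0 := by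
  unfold evec; simp [Fin.castSucc_inj]

@[simp] lemma elast_castSucc (j : Fin n) : (elast : Fin (n+1) → ℤ) j.castSucc = 0 := by
  unfold elast; exact if_neg (Fin.castSucc_lt_last j).ne

@[simp] lemma socForm_evec_right (x : Fin (n+1) → ℤ) (i : Fin n) :
    socForm x (evec i) = x i.castSucc := by
  unfold socForm
  simp [mul_ite, Finset.sum_ite_eq']

@[simp] lemma socForm_elast_right (x : Fin (n+1) → ℤ) :
    socForm x (elast) = - x (Fin.last n) := by
  unfold socForm; simp

/-! ### Good points -/

def Good (s : Fin (n+1) → ℤ) : Prop :=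
  ∃ p : Fin (n + 1) → ℤ, p ≠ 0 ∧ memT p ∧ socForm p p = 0 ∧ memT (s - p)

lemma good_base (s : Fin (n+1) → ℤ) (i1 : Fin n) (ε : ℤ) (hε : ε = 1 ∨ ε = -1)
    (hc : 1 ≤ s (Fin.last n))
    (hineq : socForm s s + 2 * (s (Fin.last n) - ε * s i1.castSucc) ≤ 0) : Good s := by
  have hε2 : ε * ε = 1 := by rcases hε with h | h <;> subst h <;> norm_num
  set p : Fin (n+1) → ℤ := ε • evec i1 + elast with hp
  have hplast : p (Fin.last n) = 1 := by
    simp [hp, Pi.add_apply, Pi.smul_apply, smul_eq_mul]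
  have hpform : socForm p p = 0 := by
    rw [hp, socForm_add_right, socForm_smul_right, socForm_evec_right, socForm_elast_right]
    simp only [Pi.add_apply, Pi.smul_apply, smul_eq_mul, evec_castSucc, elast_castSucc,
      elast_last, evec_last, ite_true, eq_self_iff_true]
    linear_combination hε2
  have hsp : socForm s p = ε * s i1.castSucc - s (Fin.last n) := by
    rw [hp, socForm_add_right, socForm_smul_right, socForm_evec_right, socForm_elast_right]
    ring
  refine ⟨p, ?_, ?_, hpform, ?_⟩
  · intro h
    have := congrFun h (Fin.last n)
    rw [hplast] at this
    simp at this
  · rw [memT_iff, hplast, hpform]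
    norm_num
  · rw [memT_iff]
    constructor
    · simp only [Pi.sub_apply, hplast]
      linarith
    · rw [socForm_sub_left, socForm_sub_right, socForm_sub_right, hpform,
        socForm_comm p s, hsp]
      linarith

lemma good_descent (v : Fin (n+1) → ℤ) (k : ℤ) (hvl : v (Fin.last n) = 1)
    (hk : 1 ≤ k) (hkm : k * socForm v v = 2) (s : Fin (n+1) → ℤ)
    (h : Good (reflMap v k s)) : Good s := by
  obtain ⟨p, hp0, hpT, hpf, hsp⟩ := h
  refine ⟨reflMap v k p, ?_, reflMap_memT hvl hk hkm hpT,
    by rw [socForm_reflMap hkm]; exact hpf, ?_⟩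
  · intro h
    apply hp0
    have := congrArg (reflMap v k) h
    rwa [reflMap_invol hkm, reflMap_zero] at this
  · have heq : s - reflMap v k p = reflMap v k (reflMap v k s - p) := by
      rw [reflMap_sub, reflMap_invol hkm]
    rw [heq]
    exact reflMap_memT hvl hk hkm hsp



lemma consec_nonneg (x : ℤ) (hx : 0 ≤ x) : 0 ≤ x * (x - 1) := by
  rcases hx.lt_or_eq with h | h
  · have h1 : 1 ≤ x := h
    nlinarith
  · rw [← h]; norm_num

lemma sign_one_or (x : ℤ) : (if 0 ≤ x then (1:ℤ) else -1) = 1 ∨ (if 0 ≤ x then (1:ℤ) else -1) = -1 := by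
  split <;> simp

lemma sign_mul (x : ℤ) : (if 0 ≤ x then (1:ℤ) else -1) * x = |x| := by
  split
  next h => rw [one_mul, abs_of_nonneg h]
  next h => rw [neg_one_mul, abs_of_neg (lt_of_not_ge h)]

lemma base2 (S a b c : ℤ) (hS : S ≤ a^2 + b^2) (hba : b ≤ a) (hb0 : 0 ≤ b)
    (hσ : a + b ≤ c) (hc : 2 ≤ c) : S - c^2 + 2*(c - a) ≤ 0 := by
  nlinarith [mul_nonneg (sub_nonneg.2 hσ) (show (0:ℤ) ≤ c + (a+b) - 2 by linarith),
    mul_nonneg hb0 (sub_nonneg.2 hba), consec_nonneg b hb0]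

lemma base3 (S a b d c : ℤ) (hS : S ≤ a^2 + b^2 + 3*d^2) (hba : b ≤ a) (hdb : d ≤ b)
    (hd0 : 0 ≤ d) (hσ : a + b + d ≤ c) (hc : 2 ≤ c) : S - c^2 + 2*(c - a) ≤ 0 := by
  nlinarith [mul_nonneg (sub_nonneg.2 hσ) (show (0:ℤ) ≤ c + (a+b+d) - 2 by linarith),
    mul_nonneg (le_trans hd0 hdb) (sub_nonneg.2 hba),
    consec_nonneg b (le_trans hd0 hdb),
    mul_nonneg hd0 (sub_nonneg.2 hdb), consec_nonneg d hd0,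
    mul_nonneg hd0 (show (0:ℤ) ≤ a - d by linarith)]

lemma key (h2 : 2 ≤ n) (h5 : n ≤ 5) (N : ℕ) :
    ∀ s : Fin (n+1) → ℤ, memT s → s (Fin.last n) ≤ (N:ℤ) → socForm s s ≤ -2 → Good s := by
  induction N with
  | zero =>
    intro s hs hN hf
    exfalso
    have h1 := (memT_iff s).1 hs
    have hc0 : s (Fin.last n) = 0 := le_antisymm (by exact_mod_cast hN) h1.1
    have hnn : 0 ≤ ∑ i : Fin n, s i.castSucc ^ 2 := Finset.sum_nonneg fun i _ => sq_nonneg _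
    have heq := socForm_self s
    rw [hc0] at heq
    norm_num at heq
    linarith
  | succ N ih =>
    intro s hs hN hf
    have hc0 : 0 ≤ s (Fin.last n) := ((memT_iff s).1 hs).1
    have hSS0 : 0 ≤ ∑ i : Fin n, s i.castSucc ^ 2 := Finset.sum_nonneg fun i _ => sq_nonneg _
    have hform := socForm_self s
    have hc2 : 2 ≤ s (Fin.last n) := by nlinarith
    -- first two maximal indices
    obtain ⟨i1, -, hmax1⟩ := Finset.exists_max_image Finset.univ
      (fun i : Fin n => |s i.castSucc|) ⟨⟨0, by omega⟩, Finset.mem_univ _⟩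
    have hcard1 : 0 < (Finset.univ.erase i1).card := by
      rw [Finset.card_erase_of_mem (Finset.mem_univ _), Finset.card_univ, Fintype.card_fin]
      omega
    obtain ⟨i2, hi2mem, hmax2⟩ := Finset.exists_max_image _
      (fun i : Fin n => |s i.castSucc|) (Finset.card_pos.mp hcard1)
    have h21 : i2 ≠ i1 := Finset.ne_of_mem_erase hi2mem
    have h12 : i1 ≠ i2 := h21.symm
    have hba : |s i2.castSucc| ≤ |s i1.castSucc| := hmax1 i2 (Finset.mem_univ _)
    have hb0 : 0 ≤ |s i2.castSucc| := abs_nonneg _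
    rcases eq_or_lt_of_le h2 with hn2 | hn3
    · -- n = 2
      have huniv : (Finset.univ : Finset (Fin n)) = {i1, i2} := by
        symm
        apply Finset.eq_of_subset_of_card_le (Finset.subset_univ _)
        rw [Finset.card_univ, Fintype.card_fin, Finset.card_insert_of_notMem (by simp [h12]),
          Finset.card_singleton]
        omega
      have hSeq : (∑ i : Fin n, s i.castSucc ^ 2) = |s i1.castSucc|^2 + |s i2.castSucc|^2 := by
        rw [huniv, Finset.sum_insert (by simp [h12]), Finset.sum_singleton, sq_abs, sq_abs]
      by_cases hred : |s i1.castSucc| + |s i2.castSucc| ≤ s (Fin.last n)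
      · apply good_base s i1 (if 0 ≤ s i1.castSucc then 1 else -1) (sign_one_or _) (by linarith)
        rw [sign_mul, hform, hSeq]
        have := base2 (|s i1.castSucc|^2 + |s i2.castSucc|^2) (|s i1.castSucc|)
          (|s i2.castSucc|) (s (Fin.last n)) le_rfl hba hb0 hred hc2
        linarith
      · push_neg at hred
        set ε1 := if 0 ≤ s i1.castSucc then (1:ℤ) else -1 with hε1def
        set ε2 := if 0 ≤ s i2.castSucc then (1:ℤ) else -1 with hε2def
        set v : Fin (n+1) → ℤ := ε1 • evec i1 + ε2 • evec i2 + elast with hvdef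
        have hxv : ∀ x : Fin (n+1) → ℤ,
            socForm x v = ε1 * x i1.castSucc + ε2 * x i2.castSucc - x (Fin.last n) := by
          intro x
          rw [hvdef, socForm_add_right, socForm_add_right, socForm_smul_right,
            socForm_smul_right, socForm_evec_right, socForm_evec_right, socForm_elast_right]
          ring
        have hvl : v (Fin.last n) = 1 := by
          simp [hvdef, Pi.add_apply, Pi.smul_apply, smul_eq_mul]
        have hv1 : v i1.castSucc = ε1 := by
          simp [hvdef, Pi.add_apply, Pi.smul_apply, smul_eq_mul, h12]
        have hv2 : v i2.castSucc = ε2 := by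
          simp [hvdef, Pi.add_apply, Pi.smul_apply, smul_eq_mul, h21]
        have hε1sq : ε1 * ε1 = 1 := by
          rcases sign_one_or (s i1.castSucc) with h | h <;> rw [hε1def, h] <;> norm_num
        have hε2sq : ε2 * ε2 = 1 := by
          rcases sign_one_or (s i2.castSucc) with h | h <;> rw [hε2def, h] <;> norm_num
        have hkm : (2:ℤ) * socForm v v = 2 := by
          rw [hxv v, hv1, hv2, hvl]
          linear_combination 2 * hε1sq + 2 * hε2sq
        have hsv : socForm s v = |s i1.castSucc| + |s i2.castSucc| - s (Fin.last n) := by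
          rw [hxv s, hε1def, hε2def, sign_mul, sign_mul]
        apply good_descent v 2 hvl (by norm_num) hkm
        apply ih _ (reflMap_memT hvl (by norm_num) hkm hs) ?_
          (by rw [socForm_reflMap hkm]; exact hf)
        rw [reflMap_last hvl, hsv]
        push_cast at hN ⊢
        omega
    · -- 3 ≤ n
      have hcard2 : 0 < ((Finset.univ.erase i1).erase i2).card := by
        rw [Finset.card_erase_of_mem hi2mem, Finset.card_erase_of_mem (Finset.mem_univ _),
          Finset.card_univ, Fintype.card_fin]
        omega
      obtain ⟨i3, hi3mem, hmax3⟩ := Finset.exists_max_image _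
        (fun i : Fin n => |s i.castSucc|) (Finset.card_pos.mp hcard2)
      have h32 : i3 ≠ i2 := Finset.ne_of_mem_erase hi3mem
      have h31 : i3 ≠ i1 := Finset.ne_of_mem_erase (Finset.mem_of_mem_erase hi3mem)
      have h13 : i1 ≠ i3 := h31.symm
      have h23 : i2 ≠ i3 := h32.symm
      have hdb : |s i3.castSucc| ≤ |s i2.castSucc| := hmax2 i3 (Finset.mem_of_mem_erase hi3mem)
      have hd0 : 0 ≤ |s i3.castSucc| := abs_nonneg _
      -- sum bound
      set t : Finset (Fin n) := {i1, i2, i3} with htdef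
      have hi1t : i1 ∉ ({i2, i3} : Finset (Fin n)) := by simp [h12, h13]
      have hi2t : i2 ∉ ({i3} : Finset (Fin n)) := by simp [h23]
      have htcard : t.card = 3 := by
        rw [htdef, Finset.card_insert_of_notMem hi1t, Finset.card_insert_of_notMem hi2t,
          Finset.card_singleton]
      have hsum_t : ∑ i ∈ t, s i.castSucc ^ 2
          = |s i1.castSucc|^2 + |s i2.castSucc|^2 + |s i3.castSucc|^2 := by
        rw [htdef, Finset.sum_insert hi1t, Finset.sum_insert hi2t, Finset.sum_singleton,
          sq_abs, sq_abs, sq_abs]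
        ring
      have hrest : ∑ i ∈ Finset.univ \ t, s i.castSucc ^ 2 ≤ 2 * |s i3.castSucc|^2 := by
        have hb : ∀ i ∈ Finset.univ \ t, s i.castSucc ^ 2 ≤ |s i3.castSucc|^2 := by
          intro i hi
          rw [Finset.mem_sdiff, htdef] at hi
          simp only [Finset.mem_insert, Finset.mem_singleton, not_or] at hi
          have hle : |s i.castSucc| ≤ |s i3.castSucc| := hmax3 i (by
            rw [Finset.mem_erase, Finset.mem_erase]
            exact ⟨hi.2.2.1, hi.2.1, Finset.mem_univ _⟩)
          calc s i.castSucc ^ 2 = |s i.castSucc|^2 := (sq_abs _).symm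
            _ ≤ |s i3.castSucc|^2 := by
                exact pow_le_pow_left₀ (abs_nonneg _) hle 2
        have hcard3 : (Finset.univ \ t).card = n - 3 := by
          rw [Finset.card_sdiff_of_subset (Finset.subset_univ _), Finset.card_univ, Fintype.card_fin, htcard]
        calc ∑ i ∈ Finset.univ \ t, s i.castSucc ^ 2
            ≤ (Finset.univ \ t).card • |s i3.castSucc|^2 :=
              Finset.sum_le_card_nsmul _ _ _ hb
          _ = ((n - 3 : ℕ) : ℤ) * |s i3.castSucc|^2 := by rw [hcard3, nsmul_eq_mul]
          _ ≤ 2 * |s i3.castSucc|^2 := by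
              apply mul_le_mul_of_nonneg_right _ (sq_nonneg _)
              have : (n - 3 : ℕ) ≤ 2 := by omega
              exact_mod_cast this
      have hSb : (∑ i : Fin n, s i.castSucc ^ 2)
          ≤ |s i1.castSucc|^2 + |s i2.castSucc|^2 + 3 * |s i3.castSucc|^2 := by
        have hsplit := Finset.sum_sdiff (f := fun i : Fin n => s i.castSucc ^ 2)
          (Finset.subset_univ t)
        rw [← hsplit, hsum_t]
        linarith
      by_cases hred : |s i1.castSucc| + |s i2.castSucc| + |s i3.castSucc| ≤ s (Fin.last n)
      · apply good_base s i1 (if 0 ≤ s i1.castSucc then 1 else -1) (sign_one_or _) (by linarith)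
        rw [sign_mul, hform]
        have := base3 (∑ i : Fin n, s i.castSucc ^ 2) (|s i1.castSucc|) (|s i2.castSucc|)
          (|s i3.castSucc|) (s (Fin.last n)) hSb hba hdb hd0 hred hc2
        linarith
      · push_neg at hred
        set ε1 := if 0 ≤ s i1.castSucc then (1:ℤ) else -1 with hε1def
        set ε2 := if 0 ≤ s i2.castSucc then (1:ℤ) else -1 with hε2def
        set ε3 := if 0 ≤ s i3.castSucc then (1:ℤ) else -1 with hε3def
        set v : Fin (n+1) → ℤ := ε1 • evec i1 + ε2 • evec i2 + ε3 • evec i3 + elast with hvdef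
        have hxv : ∀ x : Fin (n+1) → ℤ, socForm x v
            = ε1 * x i1.castSucc + ε2 * x i2.castSucc + ε3 * x i3.castSucc - x (Fin.last n) := by
          intro x
          rw [hvdef, socForm_add_right, socForm_add_right, socForm_add_right,
            socForm_smul_right, socForm_smul_right, socForm_smul_right,
            socForm_evec_right, socForm_evec_right, socForm_evec_right, socForm_elast_right]
          ring
        have hvl : v (Fin.last n) = 1 := by
          simp [hvdef, Pi.add_apply, Pi.smul_apply, smul_eq_mul]
        have hv1 : v i1.castSucc = ε1 := by
          simp [hvdef, Pi.add_apply, Pi.smul_apply, smul_eq_mul, h12, h13]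
        have hv2 : v i2.castSucc = ε2 := by
          simp [hvdef, Pi.add_apply, Pi.smul_apply, smul_eq_mul, h21, h23]
        have hv3 : v i3.castSucc = ε3 := by
          simp [hvdef, Pi.add_apply, Pi.smul_apply, smul_eq_mul, h31, h32]
        have hε1sq : ε1 * ε1 = 1 := by
          rcases sign_one_or (s i1.castSucc) with h | h <;> rw [hε1def, h] <;> norm_num
        have hε2sq : ε2 * ε2 = 1 := by
          rcases sign_one_or (s i2.castSucc) with h | h <;> rw [hε2def, h] <;> norm_num
        have hε3sq : ε3 * ε3 = 1 := by
          rcases sign_one_or (s i3.castSucc) with h | h <;> rw [hε3def, h] <;> norm_num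
        have hkm : (1:ℤ) * socForm v v = 2 := by
          rw [hxv v, hv1, hv2, hv3, hvl]
          linear_combination hε1sq + hε2sq + hε3sq
        have hsv : socForm s v
            = |s i1.castSucc| + |s i2.castSucc| + |s i3.castSucc| - s (Fin.last n) := by
          rw [hxv s, hε1def, hε2def, hε3def, sign_mul, sign_mul, sign_mul]
        apply good_descent v 1 hvl le_rfl hkm
        apply ih _ (reflMap_memT hvl le_rfl hkm hs) ?_
          (by rw [socForm_reflMap hkm]; exact hf)
        rw [reflMap_last hvl, hsv]
        push_cast at hN ⊢
        omega

end SOCAux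

/-- For `3 ≤ N < 7` (`N = n+1`), every primitive sporadic `s ∈ T_N`
satisfies `⟨s,s⟩ = -1`. -/
theorem socForm_eq_neg_one_of_primitive_sporadic
    (n : ℕ) (h3 : 2 ≤ n) (h7 : n ≤ 5) (s : Fin (n + 1) → ℤ)
    (hs : memT s) (hprim : primitiveVec s) (hspor : socSporadic s) :
    socForm s s = -1 := by
  classical
  have h1 := (SOCAux.memT_iff s).1 hs
  have hle0 : socForm s s ≤ 0 := h1.2
  have hne0 : socForm s s ≠ 0 := by
    intro h0
    apply hspor
    refine ⟨s, ?_, hs, h0, ?_⟩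
    · intro hzz
      unfold primitiveVec at hprim
      rw [hzz] at hprim
      rw [Finset.gcd_eq_zero_iff.2 (fun i _ => Pi.zero_apply i)] at hprim
      norm_num at hprim
    · rw [sub_self]
      constructor
      · simp
      · simp
  have hgt : -2 < socForm s s := by
    by_contra hh
    push_neg at hh
    obtain ⟨p, hp0, hpT, hpf, hsp⟩ :=
      SOCAux.key h3 h7 (s (Fin.last n)).toNat s hs (Int.self_le_toNat _) hh
    exact hspor ⟨p, hp0, hpT, hpf, hsp⟩
  omega
end

section
/- Let α > 0 be an irrational real number, let C := {(x,y) ∈ ℝ² : 0 ≤ y ≤ αx}, and let S := C ∩ ℤ². If U is an invertible 2×2 real matrix such that U s ∈ S and U⁻¹ s ∈ S for every s ∈ S, then U is the identity matrix. In particular, the only invertible linear map of ℝ² that maps S bijectively onto S is the identity. -/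
/-!
Mapping `S` into itself, `U` has integer entries (it maps the basis `(1,0)`, `(k,1)` of `ℤ²`
into `S`) and, since the rays through points of `S` are dense in `C`, it maps the closed cone
`C` into itself; the same holds for `U⁻¹`. The second coordinate of `U (U⁻¹ e₀) = e₀` vanishes
and is a nonnegative combination of the second coordinates of `U (1,0)` and `U (1,α)`, so either
`U` fixes the bottom edge of `C` or the nonzero integer vector `U⁻¹ e₀` lies on the irrational
top edge, which is impossible. Hence `U` and `U⁻¹` are upper triangular integer matrices with
nonnegative diagonals, so their diagonals are `1`, and `U (1,α), U⁻¹ (1,α) ∈ C` make their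
opposite upper right entries nonnegative, hence zero.
-/

open Matrix

/-- The conical semigroup `S = C ∩ ℤ²` of the irrational planar cone
`C = {(x,y) : 0 ≤ y ≤ α x}`. -/
def irratConeSemigroup (α : ℝ) : Set (Fin 2 → ℝ) :=
  {v | 0 ≤ v 1 ∧ v 1 ≤ α * v 0 ∧ (∃ a : ℤ, v 0 = (a : ℝ)) ∧ (∃ b : ℤ, v 1 = (b : ℝ))}

open Filter Topology Set

lemma Irrational.eq_zero_of_mul_intCast_eq_intCast {x : ℝ} (h : Irrational x) {m n : ℤ}
    (hmn : x * m = n) : m = 0 := by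
  by_contra hm
  exact (h.mul_intCast hm).ne_int n hmn

lemma eq_one_of_intCast_mul_eq_one {x y : ℝ} (hx : ∃ m : ℤ, x = m) (hy : ∃ n : ℤ, y = n)
    (hx0 : 0 ≤ x) (hxy : x * y = 1) : x = 1 := by
  obtain ⟨m, rfl⟩ := hx
  obtain ⟨n, rfl⟩ := hy
  exact_mod_cast Int.eq_one_of_mul_eq_one_right (by exact_mod_cast hx0) (by exact_mod_cast hxy)

lemma mulVec_apply_fin_two {R : Type*} [NonUnitalNonAssocSemiring R]
    (M : Matrix (Fin 2) (Fin 2) R) (v : Fin 2 → R) (i : Fin 2) :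
    (M *ᵥ v) i = M i 0 * v 0 + M i 1 * v 1 := by
  simp [mulVec, dotProduct, Fin.sum_univ_two]

lemma mul_apply_fin_two {R : Type*} [NonUnitalNonAssocSemiring R]
    (M N : Matrix (Fin 2) (Fin 2) R) (i j : Fin 2) :
    (M * N) i j = M i 0 * N 0 j + M i 1 * N 1 j := by
  simp [mul_apply, Fin.sum_univ_two]

def irratCone (α : ℝ) : Set (Fin 2 → ℝ) :=
  {v | 0 ≤ v 1 ∧ v 1 ≤ α * v 0}

section IrratCone

variable {α : ℝ}

lemma isClosed_irratCone (α : ℝ) : IsClosed (irratCone α) :=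
  (isClosed_le continuous_const (continuous_apply 1)).inter
    (isClosed_le (continuous_apply 1) (continuous_const.mul (continuous_apply 0)))

lemma smul_mem_irratCone {c : ℝ} (hc : 0 ≤ c) {v : Fin 2 → ℝ} (hv : v ∈ irratCone α) :
    c • v ∈ irratCone α := by
  obtain ⟨h0, h1⟩ := hv
  refine ⟨by simpa using mul_nonneg hc h0, ?_⟩
  simp only [Pi.smul_apply, smul_eq_mul]
  linarith [mul_le_mul_of_nonneg_left h1 hc]

lemma irratConeSemigroup_subset_irratCone : irratConeSemigroup α ⊆ irratCone α :=
  fun _ hv => ⟨hv.1, hv.2.1⟩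

lemma natCast_mem_irratConeSemigroup {p q : ℕ} (h : (q : ℝ) ≤ α * p) :
    ![(p : ℝ), q] ∈ irratConeSemigroup α :=
  ⟨by simp, by simpa using h, ⟨p, by simp⟩, ⟨q, by simp⟩⟩

lemma tendsto_inv_smul_natCeil_natFloor {v : Fin 2 → ℝ} (h0 : 0 ≤ v 0) (h1 : 0 ≤ v 1) :
    Tendsto (fun t : ℝ => t⁻¹ • ![(⌈v 0 * t⌉₊ : ℝ), ⌊v 1 * t⌋₊]) atTop (𝓝 v) := by
  rw [tendsto_pi_nhds]
  intro i
  fin_cases i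
  · simpa [div_eq_inv_mul] using tendsto_nat_ceil_mul_div_atTop h0
  · simpa [div_eq_inv_mul] using tendsto_nat_floor_mul_div_atTop h1

lemma mapsTo_irratCone_of_mapsTo_irratConeSemigroup (hα : 0 < α) {M : Matrix (Fin 2) (Fin 2) ℝ}
    (hM : MapsTo (M *ᵥ ·) (irratConeSemigroup α) (irratConeSemigroup α)) :
    MapsTo (M *ᵥ ·) (irratCone α) (irratCone α) := by
  intro v ⟨h1, h10⟩
  have h0 : 0 ≤ v 0 := nonneg_of_mul_nonneg_right (h1.trans h10) hα
  refine (isClosed_irratCone α).mem_of_tendsto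
    (((continuous_const.matrix_mulVec continuous_id).tendsto v).comp
      (tendsto_inv_smul_natCeil_natFloor h0 h1)) ?_
  filter_upwards [eventually_gt_atTop 0] with t ht
  rw [Function.comp_apply, id, mulVec_smul]
  refine smul_mem_irratCone (inv_nonneg.2 ht.le)
    (irratConeSemigroup_subset_irratCone (hM (natCast_mem_irratConeSemigroup ?_)))
  calc (⌊v 1 * t⌋₊ : ℝ) ≤ v 1 * t := Nat.floor_le (mul_nonneg h1 ht.le)
    _ ≤ α * (v 0 * t) := by nlinarith
    _ ≤ α * ⌈v 0 * t⌉₊ := mul_le_mul_of_nonneg_left (Nat.le_ceil _) hα.le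

lemma exists_intCast_eq_of_mapsTo_irratConeSemigroup (hα : 0 < α)
    {M : Matrix (Fin 2) (Fin 2) ℝ}
    (hM : MapsTo (M *ᵥ ·) (irratConeSemigroup α) (irratConeSemigroup α)) (i j : Fin 2) :
    ∃ z : ℤ, M i j = z := by
  obtain ⟨k, hk⟩ := exists_nat_ge α⁻¹
  obtain ⟨-, -, ⟨a, ha⟩, c, hc⟩ :=
    hM (natCast_mem_irratConeSemigroup (p := 1) (q := 0) (by simpa using hα.le))
  obtain ⟨-, -, ⟨b, hb⟩, d, hd⟩ :=
    hM (natCast_mem_irratConeSemigroup (p := k) (q := 1)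
      (by simpa using (inv_le_iff_one_le_mul₀' hα).1 hk))
  simp only [mulVec_apply_fin_two, Nat.cast_one, Nat.cast_zero, cons_val_zero, cons_val_one]
    at ha hb hc hd
  fin_cases i <;> fin_cases j <;> simp only [Fin.zero_eta, Fin.mk_one]
  exacts [⟨a, by linear_combination ha⟩,
    ⟨b - k * a, by push_cast; linear_combination hb - k * ha⟩,
    ⟨c, by linear_combination hc⟩,
    ⟨d - k * c, by push_cast; linear_combination hd - k * hc⟩]

lemma one_zero_mem_irratCone (hα : 0 ≤ α) : ![1, 0] ∈ irratCone α :=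
  ⟨by simp, by simpa using hα⟩

lemma one_self_mem_irratCone (hα : 0 ≤ α) : ![1, α] ∈ irratCone α :=
  ⟨by simpa using hα, by simp⟩

variable {M N : Matrix (Fin 2) (Fin 2) ℝ}

lemma apply_one_zero_eq_zero_or_of_mulVec_apply_one_eq_zero (hα : 0 < α)
    (hM : MapsTo (M *ᵥ ·) (irratCone α) (irratCone α)) {v : Fin 2 → ℝ} (hv : v ∈ irratCone α)
    (hMv : (M *ᵥ v) 1 = 0) : M 1 0 = 0 ∨ v 1 = α * v 0 := by
  have hbottom : 0 ≤ M 1 0 := by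
    simpa [mulVec_apply_fin_two] using (hM (one_zero_mem_irratCone hα.le)).1
  have htop : 0 ≤ M 1 0 + M 1 1 * α := by
    simpa [mulVec_apply_fin_two] using (hM (one_self_mem_irratCone hα.le)).1
  -- `α • v = (α v₀ - v₁) • (1, 0) + v₁ • (1, α)` splits `α (M v)₁` into two nonnegative terms.
  have hsplit : (α * v 0 - v 1) * M 1 0 + v 1 * (M 1 0 + M 1 1 * α) = 0 := by
    rw [mulVec_apply_fin_two] at hMv
    linear_combination α * hMv
  have h0 := mul_nonneg (sub_nonneg.2 hv.2) hbottom
  have h1 := mul_nonneg hv.1 htop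
  rcases mul_eq_zero.1 (by linarith : (α * v 0 - v 1) * M 1 0 = 0) with h | h
  · exact Or.inr (by linarith)
  · exact Or.inl h

lemma apply_one_zero_eq_zero_of_mul_eq_one (hirr : Irrational α) (hα : 0 < α)
    (hM : MapsTo (M *ᵥ ·) (irratCone α) (irratCone α))
    (hN : MapsTo (N *ᵥ ·) (irratCone α) (irratCone α))
    (hNint : ∀ i j, ∃ z : ℤ, N i j = z) (hMN : M * N = 1) : M 1 0 = 0 := by
  have h00 := congr_fun₂ hMN 0 0
  have h10 := congr_fun₂ hMN 1 0
  simp only [mul_apply_fin_two, one_apply_eq, one_apply_ne one_ne_zero] at h00 h10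
  have hcol : N *ᵥ ![1, 0] ∈ irratCone α := hN (one_zero_mem_irratCone hα.le)
  refine (apply_one_zero_eq_zero_or_of_mulVec_apply_one_eq_zero hα hM hcol
    (by simpa [mulVec_apply_fin_two] using h10)).resolve_right fun hray => ?_
  obtain ⟨m, hm⟩ := hNint 0 0
  obtain ⟨n, hn⟩ := hNint 1 0
  simp only [mulVec_apply_fin_two, hm, hn] at hray
  have hm0 : m = 0 := hirr.eq_zero_of_mul_intCast_eq_intCast (by simpa using hray.symm)
  have hn0 : (n : ℝ) = 0 := by simpa [hm0] using hray
  simp [hm, hn, hm0, hn0] at h00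

lemma upperTriangular_entries_of_mapsTo_irratCone (hα : 0 < α)
    (hM : MapsTo (M *ᵥ ·) (irratCone α) (irratCone α)) (hc : M 1 0 = 0) :
    0 ≤ M 0 0 ∧ 0 ≤ M 1 1 ∧ M 1 1 ≤ M 0 0 + α * M 0 1 := by
  obtain ⟨-, hbottom⟩ := hM (one_zero_mem_irratCone hα.le)
  obtain ⟨htop₁, htop₂⟩ := hM (one_self_mem_irratCone hα.le)
  simp only [mulVec_apply_fin_two, hc, cons_val_zero, cons_val_one] at hbottom htop₁ htop₂
  refine ⟨?_, ?_, ?_⟩ <;> nlinarith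

lemma eq_one_of_mapsTo_irratCone_of_mul_eq_one (hirr : Irrational α) (hα : 0 < α)
    (hM : MapsTo (M *ᵥ ·) (irratCone α) (irratCone α))
    (hN : MapsTo (N *ᵥ ·) (irratCone α) (irratCone α))
    (hMint : ∀ i j, ∃ z : ℤ, M i j = z) (hNint : ∀ i j, ∃ z : ℤ, N i j = z)
    (hMN : M * N = 1) (hNM : N * M = 1) : M = 1 := by
  have hc := apply_one_zero_eq_zero_of_mul_eq_one hirr hα hM hN hNint hMN
  have hc' := apply_one_zero_eq_zero_of_mul_eq_one hirr hα hN hM hMint hNM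
  obtain ⟨ha, hd, hb⟩ := upperTriangular_entries_of_mapsTo_irratCone hα hM hc
  obtain ⟨-, -, hb'⟩ := upperTriangular_entries_of_mapsTo_irratCone hα hN hc'
  have h00 := congr_fun₂ hMN 0 0
  have h01 := congr_fun₂ hMN 0 1
  have h11 := congr_fun₂ hMN 1 1
  simp only [mul_apply_fin_two, one_apply_eq, one_apply_ne zero_ne_one, hc, hc', mul_zero,
    zero_mul, add_zero, zero_add] at h00 h01 h11
  have ha1 : M 0 0 = 1 := eq_one_of_intCast_mul_eq_one (hMint 0 0) (hNint 0 0) ha h00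
  have hd1 : M 1 1 = 1 := eq_one_of_intCast_mul_eq_one (hMint 1 1) (hNint 1 1) hd h11
  rw [ha1, one_mul] at h00
  rw [hd1, one_mul] at h11
  rw [ha1, hd1] at hb
  rw [ha1, h11, mul_one] at h01
  rw [h00, h11] at hb'
  have hMb : 0 ≤ M 0 1 := nonneg_of_mul_nonneg_right (by linarith) hα
  have hNb : 0 ≤ N 0 1 := nonneg_of_mul_nonneg_right (by linarith) hα
  have hb0 : M 0 1 = 0 := by linarith
  rw [eta_fin_two M, ha1, hb0, hc, hd1, one_fin_two]

end IrratCone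

/-- For irrational `α > 0`, the only invertible linear map of `ℝ²`
mapping `S = C ∩ ℤ²` into itself in both directions is the identity. -/
theorem irrational_cone_semigroup_automorphism_trivial
    (α : ℝ) (hirr : Irrational α) (hpos : 0 < α)
    (U : Matrix (Fin 2) (Fin 2) ℝ) (hU : IsUnit U.det)
    (hfwd : ∀ s ∈ irratConeSemigroup α, U.mulVec s ∈ irratConeSemigroup α)
    (hbwd : ∀ s ∈ irratConeSemigroup α, U⁻¹.mulVec s ∈ irratConeSemigroup α) :
    U = 1 :=
  eq_one_of_mapsTo_irratCone_of_mul_eq_one hirr hpos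
    (mapsTo_irratCone_of_mapsTo_irratConeSemigroup hpos hfwd)
    (mapsTo_irratCone_of_mapsTo_irratConeSemigroup hpos hbwd)
    (exists_intCast_eq_of_mapsTo_irratConeSemigroup hpos hfwd)
    (exists_intCast_eq_of_mapsTo_irratConeSemigroup hpos hbwd)
    (mul_nonsing_inv U hU) (nonsing_inv_mul U hU)
end
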